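/- arXiv:1811.06339 — 5 statements merged into one kernel-verified Lean document; each statement's English description precedes it below -/
import Mathlib

section
/- Let γ ∈ (1/3, 1/2], let (X,𝕏) satisfy Chen's relations, and let (Y, Y') be controlled by X in the sense of Gubinelli: Y_t − Y_s = Y'_s X_{t,s} + R^Y_{t,s} with |R^Y_{t,s}| ≤ C_R |t−s|^{2γ} and |Y'_t − Y'_s| ≤ C_{Y'} |t−s|^γ. Define Ξ_{t,s} := Y_s X_{t,s} + Y'_s 𝕏_{t,s}. Then for all s ≤ u ≤ t: Ξ_{t,s} − Ξ_{t,u} − Ξ_{u,s} = −R^Y_{u,s} X_{t,u} − (Y'_u − Y'_s) 𝕏_{t,u}, and consequently |Ξ_{t,s} − Ξ_{t,u} − Ξ_{u,s}| ≤ (C_R |X|_γ + C_{Y'} |𝕏|_{2γ}) |t−s|^{3γ}, where |X|_γ, |𝕏|_{2γ} are the Hölder seminorms of X and 𝕏. -/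
open Finset

/-!
STATEMENT 5: For a controlled rough path `(Y,Y')` (Y row-vector valued, Y' matrix valued)
and `Ξ_{t,s} := Y_s X_{t,s} + Y'_s 𝕏_{t,s}`, one has the algebraic identity
`Ξ_{t,s} − Ξ_{t,u} − Ξ_{u,s} = −R^Y_{u,s} X_{t,u} − (Y'_u − Y'_s) 𝕏_{t,u}` and the bound
`|Ξ_{t,s} − Ξ_{t,u} − Ξ_{u,s}| ≤ (C_R |X|_γ + C_{Y'} |𝕏|_{2γ}) |t−s|^{3γ}`.
Euclidean (ℓ²/Frobenius) norms are used, so that Cauchy–Schwarz gives the exact constant.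
-/

/-- Dot product of vectors in `ℝ^d`. -/
noncomputable def dotP {d : ℕ} (v w : Fin d → ℝ) : ℝ := ∑ i, v i * w i

/-- Frobenius pairing of `d × d` matrices. -/
noncomputable def frobP {d : ℕ} (A B : Fin d → Fin d → ℝ) : ℝ := ∑ i, ∑ j, A i j * B i j

/-- Matrix applied to a vector: `(A v)_i = Σ_j A_{ij} v_j`. -/
noncomputable def applyM {d : ℕ} (A : Fin d → Fin d → ℝ) (v : Fin d → ℝ) : Fin d → ℝ :=
  fun i => ∑ j, A i j * v j

/-- Euclidean norm of a vector in `ℝ^d`. -/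
noncomputable def eNorm {d : ℕ} (v : Fin d → ℝ) : ℝ := Real.sqrt (∑ i, (v i) ^ 2)

/-- Frobenius norm of a `d × d` matrix. -/
noncomputable def eNormM {d : ℕ} (A : Fin d → Fin d → ℝ) : ℝ :=
  Real.sqrt (∑ i, ∑ j, (A i j) ^ 2)

/-- Outer product. -/
noncomputable def outerProd {d : ℕ} (x y : Fin d → ℝ) : Fin d → Fin d → ℝ :=
  fun i j => x i * y j


lemma dotP_add_left {d : ℕ} (a b x : Fin d → ℝ) : dotP (a + b) x = dotP a x + dotP b x := by
  simp [dotP, add_mul, Finset.sum_add_distrib]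

lemma dotP_add_right {d : ℕ} (x a b : Fin d → ℝ) : dotP x (a + b) = dotP x a + dotP x b := by
  simp [dotP, mul_add, Finset.sum_add_distrib]

lemma frobP_add_right {d : ℕ} (A : Fin d → Fin d → ℝ) (B C : Fin d → Fin d → ℝ) :
    frobP A (B + C) = frobP A B + frobP A C := by
  simp [frobP, mul_add, Finset.sum_add_distrib]

lemma frobP_sub_left {d : ℕ} (A B C : Fin d → Fin d → ℝ) :
    frobP (A - B) C = frobP A C - frobP B C := by
  simp [frobP, sub_mul, Finset.sum_sub_distrib]

lemma frobP_outer {d : ℕ} (A : Fin d → Fin d → ℝ) (x y : Fin d → ℝ) :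
    frobP A (outerProd x y) = dotP (applyM A y) x := by
  simp [frobP, outerProd, applyM, dotP, Finset.sum_mul]
  congr 1; ext i; congr 1; ext j; ring

lemma abs_dotP_le {d : ℕ} (v w : Fin d → ℝ) : |dotP v w| ≤ eNorm v * eNorm w := by
  rw [← Real.sqrt_sq_eq_abs, eNorm, eNorm, ← Real.sqrt_mul (by positivity)]
  exact Real.sqrt_le_sqrt (Finset.sum_mul_sq_le_sq_mul_sq _ v w)

lemma abs_frobP_le {d : ℕ} (A B : Fin d → Fin d → ℝ) : |frobP A B| ≤ eNormM A * eNormM B := by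
  rw [← Real.sqrt_sq_eq_abs, eNormM, eNormM, ← Real.sqrt_mul (by positivity)]
  apply Real.sqrt_le_sqrt
  have : frobP A B = ∑ p : Fin d × Fin d, A p.1 p.2 * B p.1 p.2 := by
    simp [frobP, Fintype.sum_prod_type]
  rw [this]
  calc (∑ p : Fin d × Fin d, A p.1 p.2 * B p.1 p.2)^2
      ≤ (∑ p : Fin d × Fin d, (A p.1 p.2)^2) * ∑ p : Fin d × Fin d, (B p.1 p.2)^2 :=
        Finset.sum_mul_sq_le_sq_mul_sq _ _ _
    _ = (∑ i, ∑ j, (A i j)^2) * ∑ i, ∑ j, (B i j)^2 := by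
        simp [Fintype.sum_prod_type]

theorem controlled_germ_coboundary {d : ℕ} (T γ CR CY CX CXX : ℝ) (hT : 0 < T)
    (hγ1 : 1 / 3 < γ) (hγ2 : γ ≤ 1 / 2)
    (hCR : 0 ≤ CR) (hCY : 0 ≤ CY) (hCX : 0 ≤ CX) (hCXX : 0 ≤ CXX)
    (X : ℝ → ℝ → Fin d → ℝ) (XX : ℝ → ℝ → Fin d → Fin d → ℝ)
    (hChen1 : ∀ s u t : ℝ, 0 ≤ s → s ≤ u → u ≤ t → t ≤ T → X t s = X t u + X u s)
    (hChen2 : ∀ s u t : ℝ, 0 ≤ s → s ≤ u → u ≤ t → t ≤ T →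
      XX t s - XX t u - XX u s = outerProd (X t u) (X u s))
    (hXb : ∀ s t : ℝ, 0 ≤ s → s ≤ t → t ≤ T → eNorm (X t s) ≤ CX * (t - s) ^ γ)
    (hXXb : ∀ s t : ℝ, 0 ≤ s → s ≤ t → t ≤ T → eNormM (XX t s) ≤ CXX * (t - s) ^ (2 * γ))
    (Y : ℝ → Fin d → ℝ) (Y' : ℝ → Fin d → Fin d → ℝ) (R : ℝ → ℝ → Fin d → ℝ)
    (hctrl : ∀ s t : ℝ, 0 ≤ s → s ≤ t → t ≤ T →
      Y t = Y s + applyM (Y' s) (X t s) + R t s)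
    (hR : ∀ s t : ℝ, 0 ≤ s → s ≤ t → t ≤ T → eNorm (R t s) ≤ CR * (t - s) ^ (2 * γ))
    (hY' : ∀ s t : ℝ, 0 ≤ s → s ≤ t → t ≤ T → eNormM (Y' t - Y' s) ≤ CY * (t - s) ^ γ) :
    ∀ s u t : ℝ, 0 ≤ s → s ≤ u → u ≤ t → t ≤ T →
      ((dotP (Y s) (X t s) + frobP (Y' s) (XX t s))
          - (dotP (Y u) (X t u) + frobP (Y' u) (XX t u))
          - (dotP (Y s) (X u s) + frobP (Y' s) (XX u s))
        = - dotP (R u s) (X t u) - frobP (Y' u - Y' s) (XX t u)) ∧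
      |(dotP (Y s) (X t s) + frobP (Y' s) (XX t s))
          - (dotP (Y u) (X t u) + frobP (Y' u) (XX t u))
          - (dotP (Y s) (X u s) + frobP (Y' s) (XX u s))|
        ≤ (CR * CX + CY * CXX) * (t - s) ^ (3 * γ) := by
  intro s u t hs hsu hut htT
  have hsT : s ≤ T := le_trans (le_trans hsu hut) htT
  have huT : u ≤ T := le_trans hut htT
  have hu0 : 0 ≤ u := le_trans hs hsu
  have hγ0 : 0 < γ := lt_trans (by norm_num) hγ1
  -- the algebraic identity
  have hX : X t s = X t u + X u s := hChen1 s u t hs hsu hut htT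
  have hXX : XX t s = outerProd (X t u) (X u s) + (XX t u + XX u s) := by
    have h := hChen2 s u t hs hsu hut htT
    rw [sub_sub, sub_eq_iff_eq_add] at h
    rw [h]
  have hY : Y u = Y s + applyM (Y' s) (X u s) + R u s := hctrl s u hs hsu huT
  have hid : (dotP (Y s) (X t s) + frobP (Y' s) (XX t s))
          - (dotP (Y u) (X t u) + frobP (Y' u) (XX t u))
          - (dotP (Y s) (X u s) + frobP (Y' s) (XX u s))
        = - dotP (R u s) (X t u) - frobP (Y' u - Y' s) (XX t u) := by
    rw [hX, hXX, hY, dotP_add_right, frobP_add_right, frobP_add_right,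
      dotP_add_left, dotP_add_left, frobP_sub_left, frobP_outer]
    ring
  refine ⟨hid, ?_⟩
  rw [hid]
  -- the bound
  have hts : 0 ≤ t - s := by linarith
  have htu : 0 ≤ t - u := by linarith
  have hus : 0 ≤ u - s := by linarith
  have habs : |- dotP (R u s) (X t u) - frobP (Y' u - Y' s) (XX t u)|
      ≤ eNorm (R u s) * eNorm (X t u) + eNormM (Y' u - Y' s) * eNormM (XX t u) := by
    calc |- dotP (R u s) (X t u) - frobP (Y' u - Y' s) (XX t u)|
        ≤ |dotP (R u s) (X t u)| + |frobP (Y' u - Y' s) (XX t u)| := by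
          rw [show - dotP (R u s) (X t u) - frobP (Y' u - Y' s) (XX t u)
            = -(dotP (R u s) (X t u) + frobP (Y' u - Y' s) (XX t u)) by ring, abs_neg]
          exact abs_add_le _ _
      _ ≤ _ := add_le_add (abs_dotP_le _ _) (abs_frobP_le _ _)
  refine habs.trans ?_
  have e1 : eNorm (R u s) * eNorm (X t u) ≤ CR * CX * (t - s) ^ (3 * γ) := by
    have h1 := hR s u hs hsu huT
    have h2 := hXb u t hu0 hut htT
    have hn1 : 0 ≤ eNorm (R u s) := Real.sqrt_nonneg _
    have hn2 : 0 ≤ eNorm (X t u) := Real.sqrt_nonneg _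
    calc eNorm (R u s) * eNorm (X t u)
        ≤ (CR * (u - s) ^ (2 * γ)) * (CX * (t - u) ^ γ) :=
          mul_le_mul h1 h2 hn2 (by positivity)
      _ ≤ (CR * (t - s) ^ (2 * γ)) * (CX * (t - s) ^ γ) := by
          gcongr <;> linarith
      _ = CR * CX * (t - s) ^ (3 * γ) := by
          rw [show (3:ℝ) * γ = 2 * γ + γ by ring, Real.rpow_add' hts (by positivity)]
          ring
  have e2 : eNormM (Y' u - Y' s) * eNormM (XX t u) ≤ CY * CXX * (t - s) ^ (3 * γ) := by
    have h1 := hY' s u hs hsu huT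
    have h2 := hXXb u t hu0 hut htT
    have hn2 : 0 ≤ eNormM (XX t u) := Real.sqrt_nonneg _
    calc eNormM (Y' u - Y' s) * eNormM (XX t u)
        ≤ (CY * (u - s) ^ γ) * (CXX * (t - u) ^ (2 * γ)) :=
          mul_le_mul h1 h2 hn2 (by positivity)
      _ ≤ (CY * (t - s) ^ γ) * (CXX * (t - s) ^ (2 * γ)) := by
          gcongr <;> linarith
      _ = CY * CXX * (t - s) ^ (3 * γ) := by
          rw [show (3:ℝ) * γ = γ + 2 * γ by ring, Real.rpow_add' hts (by positivity)]
          ring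
  calc _ ≤ CR * CX * (t - s) ^ (3 * γ) + CY * CXX * (t - s) ^ (3 * γ) := add_le_add e1 e2
    _ = (CR * CX + CY * CXX) * (t - s) ^ (3 * γ) := by ring
end

section
/- (Sewing Lemma with semigroup) Let (S_t) be a strongly continuous semigroup of bounded operators on a Banach space V with sup_{0≤t≤T} ‖S_t‖ ≤ M, let 0 < γ ≤ 1 < μ, and let Ξ : Δ_2 → V be continuous with |Ξ_{t,s}| ≤ C|t−s|^γ and |(δ̂Ξ)_{t,u,s}| ≤ C|t−s|^μ where (δ̂Ξ)_{t,u,s} = Ξ_{t,s} − Ξ_{t,u} − S_{t−u}Ξ_{u,s}. Then the limit I_{t,s} := lim_{|P|→0} Σ_{[u,v]∈P} S_{t−v} Ξ_{v,u} over partitions P of [s,t] exists in V, satisfies δ̂I = 0, and ‖I_{t,s} − Ξ_{t,s}‖ ≤ K·C·|t−s|^μ for a constant K depending only on μ and M. -/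
/-!
Young's argument: a partition of `[s, t]` into `n + 1` intervals has an interior point whose two
adjacent intervals have total length at most `2 (t - s) / n`; removing it changes the Riemann sum by
`S_{t-v} (δ̂Ξ)_{v,u,w}`, of norm at most `M C (2 (t - s) / n) ^ μ`. Removing points one at a time,
every Riemann sum stays within `M 2 ^ μ ζ(μ) C (t - s) ^ μ` of `Ξ_{t,s}`. Applied on each interval
of a partition of mesh `δ`, this bounds the change of the Riemann sum under refinement by
`O(δ ^ (μ - 1) (t - s))`. Two partitions are compared through their common refinement, whose
intervals are the intersections `[σ_i, σ_{i+1}] ∩ [τ_j, τ_{j+1}]`: this gives the Cauchy property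
of the Riemann sums, and refining by `{s, u, t}` gives `δ̂I = 0` in the limit.
-/

open Finset Filter Topology

namespace SemigroupSewing

structure IsPartition (σ : ℕ → ℝ) (n : ℕ) (s t : ℝ) : Prop where
  map_zero : σ 0 = s
  map_last : σ n = t
  mono : ∀ i < n, σ i ≤ σ (i + 1)

def eraseIdx (k : ℕ) (σ : ℕ → ℝ) : ℕ → ℝ :=
  fun i => σ (if i < k then i else i + 1)

namespace IsPartition

variable {σ : ℕ → ℝ} {n : ℕ} {s t : ℝ}

theorem le_of_le (hσ : IsPartition σ n s t) {i j : ℕ} (hij : i ≤ j) (hjn : j ≤ n) :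
    σ i ≤ σ j := by
  induction j, hij using Nat.le_induction with
  | base => exact le_rfl
  | succ j _ ih => exact (ih (by omega)).trans (hσ.mono j (by omega))

theorem left_le (hσ : IsPartition σ n s t) {i : ℕ} (hi : i ≤ n) : s ≤ σ i :=
  hσ.map_zero ▸ hσ.le_of_le (Nat.zero_le i) hi

theorem le_right (hσ : IsPartition σ n s t) {i : ℕ} (hi : i ≤ n) : σ i ≤ t :=
  hσ.map_last ▸ hσ.le_of_le hi le_rfl

theorem left_le_right (hσ : IsPartition σ n s t) : s ≤ t :=
  (hσ.left_le le_rfl).trans_eq hσ.map_last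

theorem sum_rpow_le {δ μ : ℝ} (hσ : IsPartition σ n s t) (hμ : 1 ≤ μ)
    (hδ : ∀ i < n, σ (i + 1) - σ i ≤ δ) :
    ∑ i ∈ range n, (σ (i + 1) - σ i) ^ μ ≤ δ ^ (μ - 1) * (t - s) := by
  calc ∑ i ∈ range n, (σ (i + 1) - σ i) ^ μ
      ≤ ∑ i ∈ range n, δ ^ (μ - 1) * (σ (i + 1) - σ i) := by
        refine sum_le_sum fun i hi => ?_
        have hgap : 0 ≤ σ (i + 1) - σ i := sub_nonneg.mpr (hσ.mono i (mem_range.mp hi))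
        calc (σ (i + 1) - σ i) ^ μ = (σ (i + 1) - σ i) ^ (μ - 1) * (σ (i + 1) - σ i) := by
              rw [← Real.rpow_add_one' hgap (by linarith), sub_add_cancel]
          _ ≤ δ ^ (μ - 1) * (σ (i + 1) - σ i) := by
              gcongr
              exact hδ i (mem_range.mp hi)
    _ = δ ^ (μ - 1) * (t - s) := by rw [← mul_sum, sum_range_sub, hσ.map_last, hσ.map_zero]

theorem exists_sub_le {m : ℕ} (hσ : IsPartition σ (m + 2) s t) :
    ∃ p ≤ m, σ (p + 2) - σ p ≤ 2 * (t - s) / (m + 1) := by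
  have hsum : ∑ p ∈ range (m + 1), (σ (p + 2) - σ p)
      ≤ ∑ p ∈ range (m + 1), 2 * (t - s) / (m + 1) := by
    have htelescope : ∑ p ∈ range (m + 1), (σ (p + 2) - σ p)
        = σ (m + 2) - σ 1 + (σ (m + 1) - σ 0) := by
      rw [← sum_range_sub (fun p => σ (p + 1)), ← sum_range_sub σ, ← sum_add_distrib]
      exact sum_congr rfl fun p _ => by ring
    have h1 : s ≤ σ 1 := hσ.left_le (by omega)
    have h2 : σ (m + 1) ≤ t := hσ.le_right (by omega)
    rw [htelescope, hσ.map_last, hσ.map_zero, sum_const, card_range, nsmul_eq_mul]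
    push_cast
    rw [mul_div_cancel₀ _ (by positivity)]
    linarith
  obtain ⟨p, hp, hle⟩ := exists_le_of_sum_le ⟨0, by simp⟩ hsum
  exact ⟨p, Nat.lt_succ_iff.mp (mem_range.mp hp), hle⟩

theorem eraseIdx {m p : ℕ} (hσ : IsPartition σ (m + 2) s t) (hp : p ≤ m) :
    IsPartition (SemigroupSewing.eraseIdx (p + 1) σ) (m + 1) s t where
  map_zero := by simpa [SemigroupSewing.eraseIdx] using hσ.map_zero
  map_last := by simpa [SemigroupSewing.eraseIdx, show ¬ m + 1 < p + 1 by omega] using hσ.map_last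
  mono i hi := hσ.le_of_le (by split_ifs <;> omega) (by split_ifs <;> omega)

theorem clamp {a b : ℝ} (hσ : IsPartition σ n s t) (hsa : s ≤ a) (hab : a ≤ b) (hbt : b ≤ t) :
    IsPartition (fun i => max a (min (σ i) b)) n a b where
  map_zero := by rw [hσ.map_zero, min_eq_left (hsa.trans hab), max_eq_left hsa]
  map_last := by rw [hσ.map_last, min_eq_right hbt, max_eq_right hab]
  mono i hi := max_le_max le_rfl (min_le_min (hσ.mono i hi) le_rfl)

end IsPartition

noncomputable def uniformPartition (s t : ℝ) (N : ℕ) : ℕ → ℝ :=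
  fun i => s + i * ((t - s) / (N + 1))

theorem uniformPartition_succ_sub (s t : ℝ) (N i : ℕ) :
    uniformPartition s t N (i + 1) - uniformPartition s t N i = (t - s) / (N + 1) := by
  simp only [uniformPartition]
  push_cast
  ring

theorem uniformPartition_succ_sub_le {s t : ℝ} (hst : s ≤ t) {N a : ℕ} (hNa : N ≤ a) (i : ℕ) :
    uniformPartition s t a (i + 1) - uniformPartition s t a i ≤ (t - s) / (N + 1) := by
  rw [uniformPartition_succ_sub]
  exact div_le_div_of_nonneg_left (sub_nonneg.mpr hst) (by positivity) (by gcongr)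

theorem isPartition_uniformPartition {s t : ℝ} (hst : s ≤ t) (N : ℕ) :
    IsPartition (uniformPartition s t N) (N + 1) s t where
  map_zero := by simp [uniformPartition]
  map_last := by
    simp only [uniformPartition]
    push_cast
    rw [mul_div_cancel₀ _ (by positivity)]
    ring
  mono i _ := by
    rw [← sub_nonneg, uniformPartition_succ_sub]
    exact div_nonneg (sub_nonneg.mpr hst) (by positivity)

theorem tendsto_uniformPartition_mesh (s t : ℝ) :
    Tendsto (fun N : ℕ => (t - s) / ((N : ℝ) + 1)) atTop (𝓝 0) := by
  refine ((tendsto_const_div_atTop_nhds_zero_nat (t - s)).comp (tendsto_add_atTop_nat 1)).congr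
    fun N => ?_
  simp

theorem tendsto_rpow_sub_one {ι : Type*} {l : Filter ι} {δ : ι → ℝ} {μ : ℝ} (hμ : 1 < μ)
    (hδ : Tendsto δ l (𝓝 0)) : Tendsto (fun x => δ x ^ (μ - 1)) l (𝓝 0) := by
  have h := hδ.rpow_const (p := μ - 1) (Or.inr (by linarith))
  rwa [Real.zero_rpow (by linarith)] at h

theorem tendsto_mul_rpow_sub_one_mul {ι : Type*} {l : Filter ι} {δ : ι → ℝ} {μ : ℝ} (hμ : 1 < μ)
    (hδ : Tendsto δ l (𝓝 0)) (A B : ℝ) : Tendsto (fun x => A * (δ x ^ (μ - 1) * B)) l (𝓝 0) := by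
  simpa using ((tendsto_rpow_sub_one hμ hδ).mul_const B).const_mul A

theorem max_min_sub_max_min_le {a b x y : ℝ} (hxy : x ≤ y) :
    max a (min y b) - max a (min x b) ≤ y - x := by
  simp only [max_def, min_def]
  split_ifs <;> linarith

theorem max_min_mem_Icc {a b : ℝ} (hab : a ≤ b) (x : ℝ) : max a (min x b) ∈ Set.Icc a b :=
  ⟨le_max_left _ _, max_le hab (min_le_right _ _)⟩

/-- Both intervals are `[a, b] ∩ [p, q]` when this is nonempty; otherwise both are degenerate. -/
theorem max_min_cases {a b p q : ℝ} (hab : a ≤ b) (hpq : p ≤ q) :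
    (max a (min p b) = max p (min a q) ∧ max a (min q b) = max p (min b q)) ∨
      (max a (min p b) = max a (min q b) ∧ max p (min a q) = max p (min b q)) := by
  simp only [max_def, min_def]
  split_ifs <;> first
    | exact Or.inl ⟨by linarith, by linarith⟩
    | exact Or.inr ⟨by linarith, by linarith⟩

section RiemannSum

variable {V : Type*} [NormedAddCommGroup V] [NormedSpace ℝ V]

noncomputable def riemannSum (S : ℝ → V →L[ℝ] V) (Ξ : ℝ → ℝ → V) (t : ℝ) (σ : ℕ → ℝ) (n : ℕ) :
    V :=
  ∑ i ∈ range n, S (t - σ (i + 1)) (Ξ (σ (i + 1)) (σ i))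

variable {S : ℝ → V →L[ℝ] V} {Ξ : ℝ → ℝ → V} {σ : ℕ → ℝ}

theorem map_riemannSum (hS : ∀ a b : ℝ, 0 ≤ a → 0 ≤ b → S (a + b) = (S a).comp (S b))
    {b t : ℝ} {n : ℕ} (hbt : b ≤ t) (hσ : ∀ i ≤ n, σ i ≤ b) :
    S (t - b) (riemannSum S Ξ b σ n) = riemannSum S Ξ t σ n := by
  rw [riemannSum, riemannSum, map_sum]
  refine sum_congr rfl fun i hi => ?_
  have hi' := hσ (i + 1) (by simp at hi; omega)
  rw [← ContinuousLinearMap.comp_apply, ← hS _ _ (by linarith) (by linarith), sub_add_sub_cancel]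

theorem riemannSum_succ (t : ℝ) (n : ℕ) :
    riemannSum S Ξ t σ (n + 1) = riemannSum S Ξ t σ n + S (t - σ (n + 1)) (Ξ (σ (n + 1)) (σ n)) :=
  sum_range_succ _ n

theorem riemannSum_add (t : ℝ) (k l : ℕ) :
    riemannSum S Ξ t σ (k + l)
      = riemannSum S Ξ t σ k + riemannSum S Ξ t (fun i => σ (k + i)) l := by
  simp only [riemannSum, sum_range_add, add_assoc]

theorem riemannSum_sub_riemannSum_eraseIdx
    (hS : ∀ a b : ℝ, 0 ≤ a → 0 ≤ b → S (a + b) = (S a).comp (S b)) {t : ℝ} {m p : ℕ}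
    (hp : p ≤ m) (h12 : σ (p + 1) ≤ σ (p + 2)) (h2t : σ (p + 2) ≤ t) :
    riemannSum S Ξ t σ (m + 2) - riemannSum S Ξ t (eraseIdx (p + 1) σ) (m + 1) =
      -S (t - σ (p + 2)) (Ξ (σ (p + 2)) (σ p) - Ξ (σ (p + 2)) (σ (p + 1))
        - S (σ (p + 2) - σ (p + 1)) (Ξ (σ (p + 1)) (σ p))) := by
  obtain ⟨l, rfl⟩ := Nat.exists_eq_add_of_le hp
  have hhead : riemannSum S Ξ t (eraseIdx (p + 1) σ) p = riemannSum S Ξ t σ p :=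
    sum_congr rfl fun i hi => by
      simp only [eraseIdx, mem_range] at hi ⊢
      rw [if_pos (by omega), if_pos (by omega)]
  have htail : (fun i => eraseIdx (p + 1) σ (p + 1 + i)) = fun i => σ (p + 2 + i) := by
    funext i
    simp only [eraseIdx, if_neg (show ¬ p + 1 + i < p + 1 by omega)]
    congr 1
    omega
  have hsplit : t - σ (p + 1) = (t - σ (p + 2)) + (σ (p + 2) - σ (p + 1)) := by ring
  rw [show p + l + 2 = p + 2 + l by ring, show p + l + 1 = p + 1 + l by ring,
    riemannSum_add t (p + 2) l, riemannSum_add (σ := eraseIdx (p + 1) σ) t (p + 1) l, htail,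
    riemannSum_succ, riemannSum_succ, riemannSum_succ, hhead]
  simp only [eraseIdx, lt_self_iff_false, if_false, lt_add_one, if_true]
  rw [hsplit, hS _ _ (by linarith) (by linarith)]
  simp only [ContinuousLinearMap.comp_apply, map_sub]
  abel

theorem sum_riemannSum_clamp_comm {τ : ℕ → ℝ} {s t : ℝ} {n m : ℕ}
    (hΞ : ∀ x ∈ Set.Icc s t, Ξ x x = 0) (hσ : IsPartition σ n s t) (hτ : IsPartition τ m s t) :
    ∑ i ∈ range n, riemannSum S Ξ t (fun j => max (σ i) (min (τ j) (σ (i + 1)))) m =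
      ∑ j ∈ range m, riemannSum S Ξ t (fun i => max (τ j) (min (σ i) (τ (j + 1)))) n := by
  simp only [riemannSum]
  rw [sum_comm]
  refine sum_congr rfl fun j hj => sum_congr rfl fun i hi => ?_
  have hi := mem_range.mp hi
  have hj := mem_range.mp hj
  rcases max_min_cases (hσ.mono i hi) (hτ.mono j hj) with ⟨h1, h2⟩ | ⟨h1, h2⟩
  · rw [h1, h2]
  · have hσi := Set.Icc_subset_Icc (hσ.left_le hi.le) (hσ.le_right hi)
    have hτj := Set.Icc_subset_Icc (hτ.left_le hj.le) (hτ.le_right hj)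
    rw [← h1, ← h2, hΞ _ (hσi (max_min_mem_Icc (hσ.mono i hi) _)),
      hΞ _ (hτj (max_min_mem_Icc (hτ.mono j hj) _)), map_zero, map_zero]

end RiemannSum

noncomputable def sewingConst (μ M : ℝ) : ℝ :=
  M * 2 ^ μ * ∑' k : ℕ, 1 / ((k : ℝ) + 1) ^ μ

theorem summable_one_div_nat_add_one_rpow {μ : ℝ} (hμ : 1 < μ) :
    Summable fun k : ℕ => 1 / ((k : ℝ) + 1) ^ μ := by
  simpa using (summable_nat_add_iff 1).mpr (Real.summable_one_div_nat_rpow.mpr hμ)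

theorem sewingConst_pos {μ M : ℝ} (hμ : 1 < μ) (hM : 0 < M) : 0 < sewingConst μ M :=
  mul_pos (by positivity)
    ((summable_one_div_nat_add_one_rpow hμ).tsum_pos (fun _ => by positivity) 0 (by simp))

theorem sewingConst_nonneg {μ M : ℝ} (hM : 0 ≤ M) : 0 ≤ sewingConst μ M :=
  mul_nonneg (by positivity) (tsum_nonneg fun _ => by positivity)

structure SewingHypotheses {V : Type*} [NormedAddCommGroup V] [NormedSpace ℝ V]
    (S : ℝ → V →L[ℝ] V) (Ξ : ℝ → ℝ → V) (T M C μ : ℝ) : Prop where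
  map_zero : S 0 = ContinuousLinearMap.id ℝ V
  map_add : ∀ a b : ℝ, 0 ≤ a → 0 ≤ b → S (a + b) = (S a).comp (S b)
  norm_le : ∀ r : ℝ, 0 ≤ r → r ≤ T → ‖S r‖ ≤ M
  germ_self : ∀ x : ℝ, 0 ≤ x → x ≤ T → Ξ x x = 0
  norm_delta_le : ∀ s u t : ℝ, 0 ≤ s → s ≤ u → u ≤ t → t ≤ T →
    ‖Ξ t s - Ξ t u - S (t - u) (Ξ u s)‖ ≤ C * (t - s) ^ μ
  M_nonneg : 0 ≤ M
  C_nonneg : 0 ≤ C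

namespace SewingHypotheses

variable {V : Type*} [NormedAddCommGroup V] [NormedSpace ℝ V]
  {S : ℝ → V →L[ℝ] V} {Ξ : ℝ → ℝ → V} {T M C μ : ℝ} {σ : ℕ → ℝ} {n : ℕ} {s t : ℝ}

theorem norm_apply_le (h : SewingHypotheses S Ξ T M C μ) {r : ℝ} (hr : 0 ≤ r) (hrT : r ≤ T)
    (x : V) : ‖S r x‖ ≤ M * ‖x‖ :=
  (S r).le_of_opNorm_le (h.norm_le r hr hrT) x

theorem norm_riemannSum_sub_le_sum (h : SewingHypotheses S Ξ T M C μ) (hμ : 0 ≤ μ)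
    (hs : 0 ≤ s) (ht : t ≤ T) (hσ : IsPartition σ n s t) :
    ‖riemannSum S Ξ t σ n - Ξ t s‖ ≤ M * C * ∑ k ∈ range (n - 1), (2 * (t - s) / (k + 1)) ^ μ := by
  induction n generalizing σ with
  | zero =>
    obtain rfl : s = t := hσ.map_zero.symm.trans hσ.map_last
    simp [riemannSum, h.germ_self s hs ht]
  | succ n ih =>
    rcases n with _ | m
    · simp [riemannSum, hσ.map_zero, hσ.map_last, h.map_zero]
    obtain ⟨p, hp, hgap⟩ := hσ.exists_sub_le
    have h01 : σ p ≤ σ (p + 1) := hσ.mono p (by omega)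
    have h12 : σ (p + 1) ≤ σ (p + 2) := hσ.mono (p + 1) (by omega)
    have h2t : σ (p + 2) ≤ t := hσ.le_right (by omega)
    have hs0 : s ≤ σ p := hσ.left_le (by omega)
    have hst : s ≤ t := hσ.left_le_right
    have herase : ‖riemannSum S Ξ t σ (m + 2) - riemannSum S Ξ t (eraseIdx (p + 1) σ) (m + 1)‖
        ≤ M * C * (2 * (t - s) / (m + 1)) ^ μ := by
      rw [riemannSum_sub_riemannSum_eraseIdx h.map_add hp h12 h2t, norm_neg, mul_assoc]
      refine (h.norm_apply_le (by linarith) (by linarith) _).trans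
        (mul_le_mul_of_nonneg_left ?_ h.M_nonneg)
      refine (h.norm_delta_le _ _ _ (by linarith) h01 h12 (by linarith)).trans ?_
      exact mul_le_mul_of_nonneg_left (Real.rpow_le_rpow (by linarith) hgap hμ) h.C_nonneg
    calc ‖riemannSum S Ξ t σ (m + 2) - Ξ t s‖
        ≤ ‖riemannSum S Ξ t σ (m + 2) - riemannSum S Ξ t (eraseIdx (p + 1) σ) (m + 1)‖
          + ‖riemannSum S Ξ t (eraseIdx (p + 1) σ) (m + 1) - Ξ t s‖ :=
          norm_sub_le_norm_sub_add_norm_sub _ _ _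
      _ ≤ M * C * (2 * (t - s) / (m + 1)) ^ μ
          + M * C * ∑ k ∈ range m, (2 * (t - s) / (k + 1)) ^ μ :=
          add_le_add herase (ih (hσ.eraseIdx hp))
      _ = M * C * ∑ k ∈ range (m + 2 - 1), (2 * (t - s) / (k + 1)) ^ μ := by
          rw [show m + 2 - 1 = m + 1 by omega, sum_range_succ]
          ring

theorem norm_riemannSum_sub_le (h : SewingHypotheses S Ξ T M C μ) (hμ : 1 < μ)
    (hs : 0 ≤ s) (ht : t ≤ T) (hσ : IsPartition σ n s t) :
    ‖riemannSum S Ξ t σ n - Ξ t s‖ ≤ sewingConst μ M * C * (t - s) ^ μ := by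
  have hst : 0 ≤ t - s := sub_nonneg.mpr hσ.left_le_right
  have hsum : ∑ k ∈ range (n - 1), (2 * (t - s) / (k + 1)) ^ μ
      = (2 * (t - s)) ^ μ * ∑ k ∈ range (n - 1), 1 / ((k : ℝ) + 1) ^ μ := by
    rw [mul_sum]
    exact sum_congr rfl fun k _ => by rw [Real.div_rpow (by positivity) (by positivity)]; ring
  calc ‖riemannSum S Ξ t σ n - Ξ t s‖
      ≤ M * C * ((2 * (t - s)) ^ μ * ∑ k ∈ range (n - 1), 1 / ((k : ℝ) + 1) ^ μ) :=
        hsum ▸ h.norm_riemannSum_sub_le_sum (by linarith) hs ht hσ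
    _ ≤ M * C * ((2 * (t - s)) ^ μ * ∑' k : ℕ, 1 / ((k : ℝ) + 1) ^ μ) := by
        gcongr
        · exact mul_nonneg h.M_nonneg h.C_nonneg
        · exact (summable_one_div_nat_add_one_rpow hμ).sum_le_tsum _ fun _ _ => by positivity
    _ = sewingConst μ M * C * (t - s) ^ μ := by
        rw [sewingConst, Real.mul_rpow zero_le_two hst]
        ring

theorem mul_sewingConst_mul_nonneg (h : SewingHypotheses S Ξ T M C μ) :
    0 ≤ M * (sewingConst μ M * C) :=
  mul_nonneg h.M_nonneg (mul_nonneg (sewingConst_nonneg h.M_nonneg) h.C_nonneg)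

theorem norm_sum_riemannSum_sub_riemannSum_le (h : SewingHypotheses S Ξ T M C μ) (hμ : 1 < μ)
    (hs : 0 ≤ s) (ht : t ≤ T) (hσ : IsPartition σ n s t) {c : ℕ → ℕ → ℝ} {m : ℕ}
    (hc : ∀ i < n, IsPartition (c i) m (σ i) (σ (i + 1))) :
    ‖∑ i ∈ range n, riemannSum S Ξ t (c i) m - riemannSum S Ξ t σ n‖
      ≤ M * (sewingConst μ M * C) * ∑ i ∈ range n, (σ (i + 1) - σ i) ^ μ := by
  rw [riemannSum, ← sum_sub_distrib, mul_sum]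
  refine (norm_sum_le _ _).trans (sum_le_sum fun i hi => ?_)
  have hi := mem_range.mp hi
  have hσi : σ (i + 1) ≤ t := hσ.le_right hi
  have hsσi : s ≤ σ i := hσ.left_le hi.le
  have hσσ : σ i ≤ σ (i + 1) := hσ.mono i hi
  rw [← map_riemannSum h.map_add hσi fun j hj => (hc i hi).le_right hj, ← map_sub]
  exact (h.norm_apply_le (by linarith) (by linarith) _).trans (mul_le_mul_of_nonneg_left
    (h.norm_riemannSum_sub_le hμ (hs.trans hsσi) (hσi.trans ht) (hc i hi)) h.M_nonneg)
    |>.trans_eq (mul_assoc _ _ _).symm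

theorem norm_sum_riemannSum_clamp_sub_le (h : SewingHypotheses S Ξ T M C μ) (hμ : 1 < μ)
    (hs : 0 ≤ s) (ht : t ≤ T) {τ : ℕ → ℝ} {m : ℕ} {δ : ℝ} (hσ : IsPartition σ n s t)
    (hτ : IsPartition τ m s t) (hδ : ∀ i < n, σ (i + 1) - σ i ≤ δ) :
    ‖∑ i ∈ range n, riemannSum S Ξ t (fun j => max (σ i) (min (τ j) (σ (i + 1)))) m
        - riemannSum S Ξ t σ n‖ ≤ M * (sewingConst μ M * C) * (δ ^ (μ - 1) * (t - s)) :=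
  (h.norm_sum_riemannSum_sub_riemannSum_le hμ hs ht hσ fun i hi =>
    hτ.clamp (hσ.left_le hi.le) (hσ.mono i hi) (hσ.le_right hi)).trans
    (mul_le_mul_of_nonneg_left (hσ.sum_rpow_le hμ.le hδ) h.mul_sewingConst_mul_nonneg)

theorem norm_riemannSum_sub_riemannSum_le (h : SewingHypotheses S Ξ T M C μ) (hμ : 1 < μ)
    (hs : 0 ≤ s) (ht : t ≤ T) {τ : ℕ → ℝ} {m : ℕ} {δ₁ δ₂ : ℝ} (hσ : IsPartition σ n s t)
    (hτ : IsPartition τ m s t) (hσδ : ∀ i < n, σ (i + 1) - σ i ≤ δ₁)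
    (hτδ : ∀ j < m, τ (j + 1) - τ j ≤ δ₂) :
    ‖riemannSum S Ξ t σ n - riemannSum S Ξ t τ m‖
      ≤ M * (sewingConst μ M * C) * ((δ₁ ^ (μ - 1) + δ₂ ^ (μ - 1)) * (t - s)) := by
  have hσ' := h.norm_sum_riemannSum_clamp_sub_le hμ hs ht hσ hτ hσδ
  have hτ' := h.norm_sum_riemannSum_clamp_sub_le hμ hs ht hτ hσ hτδ
  rw [sum_riemannSum_clamp_comm (fun x hx => h.germ_self x (hs.trans hx.1) (hx.2.trans ht)) hσ hτ,
    norm_sub_rev] at hσ'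
  calc ‖riemannSum S Ξ t σ n - riemannSum S Ξ t τ m‖
      ≤ _ + _ := norm_sub_le_norm_sub_add_norm_sub _ _ _
    _ ≤ _ := add_le_add hσ' hτ'
    _ = _ := by ring

theorem norm_riemannSum_sub_split_le (h : SewingHypotheses S Ξ T M C μ) (hμ : 1 < μ)
    {u δ : ℝ} (hs : 0 ≤ s) (hsu : s ≤ u) (hut : u ≤ t) (ht : t ≤ T) (hσ : IsPartition σ n s t)
    (hδ : ∀ i < n, σ (i + 1) - σ i ≤ δ) :
    ‖riemannSum S Ξ t σ n - (riemannSum S Ξ t (fun i => max u (min (σ i) t)) n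
        + S (t - u) (riemannSum S Ξ u (fun i => max s (min (σ i) u)) n))‖
      ≤ M * (sewingConst μ M * C) * (δ ^ (μ - 1) * (t - s)) := by
  set τ : ℕ → ℝ := fun j => if j = 0 then s else if j = 1 then u else t
  have hτ : IsPartition τ 2 s t :=
    ⟨rfl, rfl, fun j hj => by interval_cases j <;> simp [τ, hsu, hut]⟩
  have hsplit : ∑ j ∈ range 2, riemannSum S Ξ t (fun i => max (τ j) (min (σ i) (τ (j + 1)))) n
      = riemannSum S Ξ t (fun i => max u (min (σ i) t)) n
        + S (t - u) (riemannSum S Ξ u (fun i => max s (min (σ i) u)) n) := by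
    rw [map_riemannSum h.map_add hut fun i _ => max_le hsu (min_le_right _ _)]
    simp [τ, sum_range_succ, add_comm]
  rw [← hsplit, ← sum_riemannSum_clamp_comm
    (fun x hx => h.germ_self x (hs.trans hx.1) (hx.2.trans ht)) hσ hτ, norm_sub_rev]
  exact h.norm_sum_riemannSum_clamp_sub_le hμ hs ht hσ hτ hδ

end SewingHypotheses

section SewingLimit

variable {V : Type*} [NormedAddCommGroup V] [NormedSpace ℝ V]

noncomputable def sewingLimit (S : ℝ → V →L[ℝ] V) (Ξ : ℝ → ℝ → V) (t s : ℝ) : V :=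
  limUnder atTop fun N : ℕ => riemannSum S Ξ t (uniformPartition s t N) (N + 1)

namespace SewingHypotheses

variable [CompleteSpace V] {S : ℝ → V →L[ℝ] V} {Ξ : ℝ → ℝ → V} {T M C μ : ℝ} {s t : ℝ}

theorem tendsto_riemannSum_uniformPartition (h : SewingHypotheses S Ξ T M C μ) (hμ : 1 < μ)
    (hs : 0 ≤ s) (hst : s ≤ t) (ht : t ≤ T) :
    Tendsto (fun N : ℕ => riemannSum S Ξ t (uniformPartition s t N) (N + 1)) atTop
      (𝓝 (sewingLimit S Ξ t s)) := by
  refine CauchySeq.tendsto_limUnder (cauchySeq_of_le_tendsto_0 (fun N : ℕ =>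
    M * (sewingConst μ M * C) * ((((t - s) / (N + 1)) ^ (μ - 1) + ((t - s) / (N + 1)) ^ (μ - 1))
      * (t - s))) (fun a b N ha hb => ?_) ?_)
  · rw [dist_eq_norm]
    exact h.norm_riemannSum_sub_riemannSum_le hμ hs ht (isPartition_uniformPartition hst a)
      (isPartition_uniformPartition hst b) (fun i _ => uniformPartition_succ_sub_le hst ha i)
      (fun i _ => uniformPartition_succ_sub_le hst hb i)
  · have hmesh := tendsto_rpow_sub_one hμ (tendsto_uniformPartition_mesh s t)
    simpa using ((hmesh.add hmesh).mul_const (t - s)).const_mul (M * (sewingConst μ M * C))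

theorem norm_sewingLimit_sub_le (h : SewingHypotheses S Ξ T M C μ) (hμ : 1 < μ)
    (hs : 0 ≤ s) (hst : s ≤ t) (ht : t ≤ T) :
    ‖sewingLimit S Ξ t s - Ξ t s‖ ≤ sewingConst μ M * C * (t - s) ^ μ :=
  le_of_tendsto ((h.tendsto_riemannSum_uniformPartition hμ hs hst ht).sub_const (Ξ t s)).norm
    (Eventually.of_forall fun N =>
      h.norm_riemannSum_sub_le hμ hs ht (isPartition_uniformPartition hst N))

theorem norm_riemannSum_sub_sewingLimit_le (h : SewingHypotheses S Ξ T M C μ) (hμ : 1 < μ)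
    (hs : 0 ≤ s) (ht : t ≤ T) {σ : ℕ → ℝ} {n : ℕ} {δ : ℝ} (hσ : IsPartition σ n s t)
    (hδ : ∀ i < n, σ (i + 1) - σ i ≤ δ) :
    ‖riemannSum S Ξ t σ n - sewingLimit S Ξ t s‖
      ≤ M * (sewingConst μ M * C) * (δ ^ (μ - 1) * (t - s)) := by
  have hst := hσ.left_le_right
  have hlim := ((tendsto_const_nhds (x := riemannSum S Ξ t σ n)).sub
    (h.tendsto_riemannSum_uniformPartition hμ hs hst ht)).norm
  have hbound := (((tendsto_rpow_sub_one hμ (tendsto_uniformPartition_mesh s t)).const_add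
    (δ ^ (μ - 1))).mul_const (t - s)).const_mul (M * (sewingConst μ M * C))
  rw [add_zero] at hbound
  exact le_of_tendsto_of_tendsto' hlim hbound fun N =>
    h.norm_riemannSum_sub_riemannSum_le hμ hs ht hσ (isPartition_uniformPartition hst N) hδ
      fun i _ => (uniformPartition_succ_sub s t N i).le

theorem tendsto_riemannSum_sewingLimit (h : SewingHypotheses S Ξ T M C μ) (hμ : 1 < μ)
    (hs : 0 ≤ s) (ht : t ≤ T) {ι : Type*} {l : Filter ι} {σ : ι → ℕ → ℝ} {n : ι → ℕ}
    {δ : ι → ℝ} (hσ : ∀ x, IsPartition (σ x) (n x) s t)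
    (hδ : ∀ x, ∀ i < n x, σ x (i + 1) - σ x i ≤ δ x) (hδ0 : Tendsto δ l (𝓝 0)) :
    Tendsto (fun x => riemannSum S Ξ t (σ x) (n x)) l (𝓝 (sewingLimit S Ξ t s)) := by
  rw [tendsto_iff_norm_sub_tendsto_zero]
  refine squeeze_zero (fun _ => norm_nonneg _)
    (fun x => h.norm_riemannSum_sub_sewingLimit_le hμ hs ht (hσ x) (hδ x)) ?_
  exact tendsto_mul_rpow_sub_one_mul hμ hδ0 _ _

theorem sewingLimit_add (h : SewingHypotheses S Ξ T M C μ) (hμ : 1 < μ) {u : ℝ}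
    (hs : 0 ≤ s) (hsu : s ≤ u) (hut : u ≤ t) (ht : t ≤ T) :
    sewingLimit S Ξ t s = sewingLimit S Ξ t u + S (t - u) (sewingLimit S Ξ u s) := by
  have hσ := isPartition_uniformPartition (hsu.trans hut)
  have hmesh : ∀ N : ℕ, ∀ i < N + 1, uniformPartition s t N (i + 1) - uniformPartition s t N i
      ≤ (t - s) / (N + 1) := fun N i _ => (uniformPartition_succ_sub s t N i).le
  have hclamp : ∀ {a b : ℝ} (N : ℕ), ∀ i < N + 1,
      max a (min (uniformPartition s t N (i + 1)) b) - max a (min (uniformPartition s t N i) b)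
        ≤ (t - s) / (N + 1) :=
    fun N i hi => (max_min_sub_max_min_le ((hσ N).mono i hi)).trans (hmesh N i hi)
  have hδ := tendsto_uniformPartition_mesh s t
  have hfull := h.tendsto_riemannSum_sewingLimit hμ hs ht hσ hmesh hδ
  have hright := h.tendsto_riemannSum_sewingLimit hμ (hs.trans hsu) ht
    (fun N => (hσ N).clamp hsu hut le_rfl) hclamp hδ
  have hleft := h.tendsto_riemannSum_sewingLimit hμ hs (hut.trans ht)
    (fun N => (hσ N).clamp le_rfl hsu hut) hclamp hδ
  have herr := squeeze_zero_norm
    (fun N => h.norm_riemannSum_sub_split_le hμ hs hsu hut ht (hσ N) (hmesh N))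
    (tendsto_mul_rpow_sub_one_mul hμ hδ _ _)
  refine tendsto_nhds_unique hfull ?_
  simpa using herr.add (hright.add (((S (t - u)).continuous.tendsto _).comp hleft))

theorem exists_pos_norm_riemannSum_sub_sewingLimit_lt (h : SewingHypotheses S Ξ T M C μ)
    (hμ : 1 < μ) (hs : 0 ≤ s) (ht : t ≤ T) {ε : ℝ} (hε : 0 < ε) :
    ∃ δ > 0, ∀ (n : ℕ) (σ : ℕ → ℝ), IsPartition σ n s t → (∀ i < n, σ (i + 1) - σ i < δ) →
      ‖riemannSum S Ξ t σ n - sewingLimit S Ξ t s‖ < ε := by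
  have hlim : Tendsto (fun δ : ℝ => M * (sewingConst μ M * C) * (δ ^ (μ - 1) * (t - s)))
      (𝓝[>] 0) (𝓝 0) :=
    tendsto_mul_rpow_sub_one_mul hμ (tendsto_id.mono_left nhdsWithin_le_nhds) _ _
  obtain ⟨δ, hδε, hδ⟩ := ((hlim.eventually (gt_mem_nhds hε)).and self_mem_nhdsWithin).exists
  exact ⟨δ, hδ, fun n σ hσ hmesh =>
    (h.norm_riemannSum_sub_sewingLimit_le hμ hs ht hσ fun i hi => (hmesh i hi).le).trans_lt hδε⟩

end SewingHypotheses

end SewingLimit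

end SemigroupSewing

theorem semigroup_sewing_lemma {V : Type*} [NormedAddCommGroup V] [NormedSpace ℝ V]
    [CompleteSpace V] (μ M : ℝ) (hμ : 1 < μ) (hM : 0 < M) :
    ∃ K : ℝ, 0 < K ∧
      ∀ (T : ℝ), 0 < T → ∀ (γ : ℝ), 0 < γ → γ ≤ 1 → ∀ (C : ℝ), 0 ≤ C →
      ∀ (S : ℝ → V →L[ℝ] V),
        S 0 = ContinuousLinearMap.id ℝ V →
        (∀ a b : ℝ, 0 ≤ a → 0 ≤ b → S (a + b) = (S a).comp (S b)) →
        (∀ v : V, Continuous fun r => S r v) →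
        (∀ r : ℝ, 0 ≤ r → r ≤ T → ‖S r‖ ≤ M) →
      ∀ (Ξ : ℝ → ℝ → V),
        (Continuous fun p : ℝ × ℝ => Ξ p.1 p.2) →
        (∀ s t : ℝ, 0 ≤ s → s ≤ t → t ≤ T → ‖Ξ t s‖ ≤ C * (t - s) ^ γ) →
        (∀ s u t : ℝ, 0 ≤ s → s ≤ u → u ≤ t → t ≤ T →
          ‖Ξ t s - Ξ t u - S (t - u) (Ξ u s)‖ ≤ C * (t - s) ^ μ) →
      ∃ I : ℝ → ℝ → V,
        (∀ s u t : ℝ, 0 ≤ s → s ≤ u → u ≤ t → t ≤ T →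
          I t s = I t u + S (t - u) (I u s)) ∧
        (∀ s t : ℝ, 0 ≤ s → s ≤ t → t ≤ T → ‖I t s - Ξ t s‖ ≤ K * C * (t - s) ^ μ) ∧
        (∀ s t : ℝ, 0 ≤ s → s ≤ t → t ≤ T → ∀ ε : ℝ, 0 < ε →
          ∃ δ : ℝ, 0 < δ ∧ ∀ (n : ℕ) (σ : ℕ → ℝ),
            σ 0 = s → σ n = t →
            (∀ i < n, σ i ≤ σ (i + 1)) →
            (∀ i < n, σ (i + 1) - σ i < δ) →
            ‖(∑ i ∈ Finset.range n, S (t - σ (i + 1)) (Ξ (σ (i + 1)) (σ i))) - I t s‖ < ε) := by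
  open SemigroupSewing in
  refine ⟨sewingConst μ M, sewingConst_pos hμ hM, ?_⟩
  intro T _ γ hγ _ C hC S hS0 hSadd _ hSnorm Ξ _ hΞ hδΞ
  have h : SewingHypotheses S Ξ T M C μ :=
    { map_zero := hS0
      map_add := hSadd
      norm_le := hSnorm
      germ_self := fun x hx hxT => norm_le_zero_iff.mp <| by
        simpa [Real.zero_rpow hγ.ne'] using hΞ x x hx le_rfl hxT
      norm_delta_le := hδΞ
      M_nonneg := hM.le
      C_nonneg := hC }
  refine ⟨sewingLimit S Ξ, fun s u t hs hsu hut ht => h.sewingLimit_add hμ hs hsu hut ht,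
    fun s t hs hst ht => h.norm_sewingLimit_sub_le hμ hs hst ht, fun s t hs _ ht ε hε => ?_⟩
  obtain ⟨δ, hδ, hδε⟩ := h.exists_pos_norm_riemannSum_sub_sewingLimit_lt hμ hs ht hε
  exact ⟨δ, hδ, fun n σ hσ0 hσn hmono hmesh => hδε n σ ⟨hσ0, hσn, hmono⟩ hmesh⟩
end

section
/- Let γ ∈ (1/3,1/2], H a Hilbert space with interpolation scale H_α and selfadjoint semigroup S_t = e^{Lt}. Let (Y,Y') satisfy the controlled condition Y_t − S_{t−s}Y_s = S_{t−s}Y'_s X_{t,s} + R^Y_{t,s} in H_{−2γ} with |R^Y_{t,s}|_{H_{−2γ}} ≤ C|t−s|^{2γ}, with Y bounded in H and Y' bounded in (H)^d, and let ψ ∈ H_{2γ}. Then the real-valued pair (⟨Y,ψ⟩, ⟨Y',ψ⟩) is a classically controlled rough path: ⟨Y_t,ψ⟩ − ⟨Y_s,ψ⟩ = ⟨Y'_s,ψ⟩ X_{t,s} + r_{t,s} with |r_{t,s}| ≲ |t−s|^{2γ}. -/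
open Finset
open scoped RealInnerProductSpace

/-!
Pairing the controlled expansion of `Y` in `H_{−2γ}` with `ψ` and moving the semigroup onto `ψ`
by selfadjointness splits the classical remainder into `φ(R^Y_{t,s})`, which is `O(|t−s|^{2γ})`,
plus the error terms `⟨Y_s, S_{t−s}ψ − ψ⟩` and `X_{t,s}⟨Y'_s, S_{t−s}ψ − ψ⟩`. Both are
`O(|t−s|^{2γ})` because `Y`, `Y'` and `X` are bounded and `ψ ∈ H_{2γ}`.
-/

section PairingRemainder

variable {H E κ : Type*} [NormedAddCommGroup H] [InnerProductSpace ℝ H]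
  [NormedAddCommGroup E] [NormedSpace ℝ E] [Fintype κ]
  (A : H →L[ℝ] H) (ι : H →L[ℝ] E) (φ : E →L[ℝ] ℝ) (ψ : H)
  (u v : H) (x : κ → ℝ) (w : κ → H)

lemma inner_sub_sum_eq_pairing_add_inner_sub
    (hA : ∀ a b : H, ⟪A a, b⟫ = ⟪a, A b⟫) (hpair : ∀ a : H, φ (ι a) = ⟪a, ψ⟫) :
    ⟪v, ψ⟫ - ⟪u, ψ⟫ - ∑ i, x i * ⟪w i, ψ⟫
      = φ (ι v - ι (A u) - ∑ i, x i • ι (A (w i)))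
        + (⟪u, A ψ - ψ⟫ + ∑ i, x i * ⟪w i, A ψ - ψ⟫) := by
  simp only [map_sub, map_sum, map_smul, hpair, hA, smul_eq_mul, inner_sub_right, mul_sub,
    sum_sub_distrib]
  ring

lemma abs_inner_sub_sum_le
    (hA : ∀ a b : H, ⟪A a, b⟫ = ⟪a, A b⟫) (hpair : ∀ a : H, φ (ι a) = ⟪a, ψ⟫) :
    |⟪v, ψ⟫ - ⟪u, ψ⟫ - ∑ i, x i * ⟪w i, ψ⟫|
      ≤ ‖φ‖ * ‖ι v - ι (A u) - ∑ i, x i • ι (A (w i))‖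
        + (‖u‖ + ∑ i, |x i| * ‖w i‖) * ‖A ψ - ψ‖ := by
  have hsum : |∑ i, x i * ⟪w i, A ψ - ψ⟫| ≤ ∑ i, |x i| * ‖w i‖ * ‖A ψ - ψ‖ :=
    (abs_sum_le_sum_abs _ _).trans <| sum_le_sum fun i _ => by
      rw [abs_mul, mul_assoc]
      gcongr
      exact abs_real_inner_le_norm _ _
  rw [inner_sub_sum_eq_pairing_add_inner_sub A ι φ ψ u v x w hA hpair]
  calc _ ≤ |φ (ι v - ι (A u) - ∑ i, x i • ι (A (w i)))|
          + (|⟪u, A ψ - ψ⟫| + |∑ i, x i * ⟪w i, A ψ - ψ⟫|) :=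
        (abs_add_le _ _).trans (by gcongr; exact abs_add_le _ _)
    _ ≤ ‖φ‖ * ‖ι v - ι (A u) - ∑ i, x i • ι (A (w i))‖
          + (‖u‖ * ‖A ψ - ψ‖ + ∑ i, |x i| * ‖w i‖ * ‖A ψ - ψ‖) := by
        gcongr
        exacts [φ.le_opNorm _, abs_real_inner_le_norm _ _]
    _ = _ := by rw [add_mul, sum_mul]

end PairingRemainder

lemma sum_abs_mul_norm_le {κ F : Type*} [Fintype κ] [SeminormedAddCommGroup F]
    (x : κ → ℝ) (w : κ → F) {M : ℝ} (hw : ∀ i, ‖w i‖ ≤ M) :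
    ∑ i, |x i| * ‖w i‖ ≤ Fintype.card κ * (‖x‖ * M) := by
  rw [← nsmul_eq_mul, ← card_univ]
  refine sum_le_card_nsmul _ _ _ fun i _ => ?_
  gcongr
  · exact norm_le_pi_norm x i
  · exact hw i

theorem pairing_is_controlled_general
    {H E : Type*} [NormedAddCommGroup H] [InnerProductSpace ℝ H]
    [NormedAddCommGroup E] [NormedSpace ℝ E]
    (d : ℕ) (γ T : ℝ) (hγ1 : 1 / 3 < γ) (hT : 0 < T)
    (S : ℝ → H →L[ℝ] H) (ι : H →L[ℝ] E)
    (hself : ∀ r : ℝ, 0 ≤ r → ∀ u v : H, ⟪S r u, v⟫ = ⟪u, S r v⟫)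
    (ψ : H) (φ : E →L[ℝ] ℝ) (hpair : ∀ u : H, φ (ι u) = ⟪u, ψ⟫)
    (K : ℝ) (hK : 0 ≤ K)
    (hψreg : ∀ r : ℝ, 0 ≤ r → r ≤ T → ‖S r ψ - ψ‖ ≤ K * r ^ (2 * γ))
    (X : ℝ → ℝ → Fin d → ℝ) (CX : ℝ) (hCX : 0 ≤ CX)
    (hX : ∀ s t : ℝ, 0 ≤ s → s ≤ t → t ≤ T → ‖X t s‖ ≤ CX * (t - s) ^ γ)
    (Y : ℝ → H) (Y' : ℝ → Fin d → H)
    (MY : ℝ) (hMY : 0 ≤ MY)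
    (hYb : ∀ t : ℝ, 0 ≤ t → t ≤ T → ‖Y t‖ ≤ MY)
    (hY'b : ∀ (t : ℝ) (i : Fin d), 0 ≤ t → t ≤ T → ‖Y' t i‖ ≤ MY)
    (CR : ℝ) (hCR : 0 ≤ CR)
    (hctrl : ∀ s t : ℝ, 0 ≤ s → s ≤ t → t ≤ T →
      ‖ι (Y t) - ι (S (t - s) (Y s)) - ∑ i, X t s i • ι (S (t - s) (Y' s i))‖
        ≤ CR * (t - s) ^ (2 * γ)) :
    ∃ C' : ℝ, 0 ≤ C' ∧ ∀ s t : ℝ, 0 ≤ s → s ≤ t → t ≤ T →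
      |⟪Y t, ψ⟫ - ⟪Y s, ψ⟫ - ∑ i, X t s i * ⟪Y' s i, ψ⟫| ≤ C' * (t - s) ^ (2 * γ) := by
  have hγ : 0 ≤ γ := by linarith
  have hTγ : 0 ≤ T ^ γ := Real.rpow_nonneg hT.le γ
  refine ⟨‖φ‖ * CR + (MY + d * (CX * T ^ γ * MY)) * K, by positivity, ?_⟩
  intro s t hs hst htT
  have hr : 0 ≤ t - s := sub_nonneg.mpr hst
  have hrT : t - s ≤ T := by linarith
  have hXT : ‖X t s‖ ≤ CX * T ^ γ :=
    (hX s t hs hst htT).trans (by gcongr)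
  have hY'sum : ∑ i, |X t s i| * ‖Y' s i‖ ≤ d * (CX * T ^ γ * MY) := by
    have := sum_abs_mul_norm_le (X t s) (Y' s) fun i => hY'b s i hs (hst.trans htT)
    rw [Fintype.card_fin] at this
    exact this.trans (by gcongr)
  calc _ ≤ ‖φ‖ * ‖ι (Y t) - ι (S (t - s) (Y s)) - ∑ i, X t s i • ι (S (t - s) (Y' s i))‖
          + (‖Y s‖ + ∑ i, |X t s i| * ‖Y' s i‖) * ‖S (t - s) ψ - ψ‖ :=
        abs_inner_sub_sum_le _ ι φ ψ _ _ _ _ (hself _ hr) hpair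
    _ ≤ ‖φ‖ * (CR * (t - s) ^ (2 * γ)) + (MY + d * (CX * T ^ γ * MY)) * (K * (t - s) ^ (2 * γ)) := by
        gcongr
        exacts [hctrl s t hs hst htT, hYb s hs (hst.trans htT), hψreg _ hr hrT]
    _ = _ := by ring

theorem pairing_is_controlled
    {H E : Type*} [NormedAddCommGroup H] [InnerProductSpace ℝ H]
    [NormedAddCommGroup E] [NormedSpace ℝ E]
    (d : ℕ) (γ T : ℝ) (hγ1 : 1 / 3 < γ) (hγ2 : γ ≤ 1 / 2) (hT : 0 < T)
    (S : ℝ → H →L[ℝ] H) (ι : H →L[ℝ] E)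
    (hself : ∀ r : ℝ, 0 ≤ r → ∀ u v : H, ⟪S r u, v⟫ = ⟪u, S r v⟫)
    (ψ : H) (φ : E →L[ℝ] ℝ) (hpair : ∀ u : H, φ (ι u) = ⟪u, ψ⟫)
    (K : ℝ) (hK : 0 ≤ K)
    (hψreg : ∀ r : ℝ, 0 ≤ r → r ≤ T → ‖S r ψ - ψ‖ ≤ K * r ^ (2 * γ))
    (X : ℝ → ℝ → Fin d → ℝ) (CX : ℝ) (hCX : 0 ≤ CX)
    (hX : ∀ s t : ℝ, 0 ≤ s → s ≤ t → t ≤ T → ‖X t s‖ ≤ CX * (t - s) ^ γ)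
    (Y : ℝ → H) (Y' : ℝ → Fin d → H)
    (MY : ℝ) (hMY : 0 ≤ MY)
    (hYb : ∀ t : ℝ, 0 ≤ t → t ≤ T → ‖Y t‖ ≤ MY)
    (hY'b : ∀ (t : ℝ) (i : Fin d), 0 ≤ t → t ≤ T → ‖Y' t i‖ ≤ MY)
    (CR : ℝ) (hCR : 0 ≤ CR)
    (hctrl : ∀ s t : ℝ, 0 ≤ s → s ≤ t → t ≤ T →
      ‖ι (Y t) - ι (S (t - s) (Y s)) - ∑ i, X t s i • ι (S (t - s) (Y' s i))‖
        ≤ CR * (t - s) ^ (2 * γ)) :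
    ∃ C' : ℝ, 0 ≤ C' ∧ ∀ s t : ℝ, 0 ≤ s → s ≤ t → t ≤ T →
      |⟪Y t, ψ⟫ - ⟪Y s, ψ⟫ - ∑ i, X t s i * ⟪Y' s i, ψ⟫| ≤ C' * (t - s) ^ (2 * γ) :=
  pairing_is_controlled_general d γ T hγ1 hT S ι hself ψ φ hpair K hK hψreg X CX hCX hX Y Y' MY hMY
    hYb hY'b CR hCR hctrl
end

section
/- Fix t > 0, h ∈ H, γ ∈ (1/3,1/2) so 2γ < 1. Let (Y,Y') be controlled by X ∈ C^γ according to the selfadjoint semigroup S in H_{−2γ}: Y_v − S_{v−u}Y_u = S_{v−u}Y'_u X_{v,u} + R^Y_{v,u} with ‖R^Y_{v,u}‖_{H_{−2γ}} ≤ C_R|v−u|^{2γ}, Y ∈ L^∞([0,t],H), Y' ∈ L^∞([0,t],H^d), and suppose ‖S_r w‖_H ≤ C r^{−2γ}‖w‖_{H_{−2γ}} for r ∈ (0,t]. Define Z_v = ∫_v^t ⟨S_{s−v}Y_v, h⟩ ds and Z'_v = ∫_v^t ⟨S_{s−v}Y'_v, h⟩ ds. Then (Z,Z') is a classically controlled rough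 path: Z_v − Z_u = Z'_u X_{v,u} + R^Z_{v,u} with R^Z_{v,u} = ∫_v^t ⟨S_{s−v}R^Y_{v,u}, h⟩ ds − ∫_u^v ⟨S_{s−u}Y_u, h⟩ ds − ∫_u^v ⟨S_{s−u}Y'_u, h⟩ ds · X_{v,u}, and |R^Z_{v,u}| ≲ (C_R t^{1−2γ} + ‖Y‖_∞ + ‖Y'‖_∞ |X|_γ) ‖h‖ |v−u|^{2γ}. -/
/-!
Applying the smoothing operator `Sh (s - v)` to the controlled expansion of `Y v` and using the
semigroup law expresses `⟪Sh (s - v) (RY v u), h⟫`, for `s > v`, through orbits of `S` alone;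
integrating over `(v, t]` and splitting `∫_u^t = ∫_u^v + ∫_v^t` gives the identity. In the bound,
the smoothing term is integrated against the integrable singularity `(s - v) ^ (-2γ)`, `2γ < 1`,
while the two integrals over `[u, v]` are `O(v - u)`; this beats `(v - u) ^ (2γ)` directly, and
`(v - u) ^ γ` once multiplied by `|X v u| ≲ (v - u) ^ γ`.
-/

open Finset
open scoped RealInnerProductSpace

theorem le_rpow_one_sub_mul_rpow {x T β : ℝ} (hx : 0 ≤ x) (hxT : x ≤ T) (hβ : β ≤ 1) :
    x ≤ T ^ (1 - β) * x ^ β :=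
  calc x = x ^ (1 - β + β) := by rw [sub_add_cancel, Real.rpow_one]
    _ = x ^ (1 - β) * x ^ β := Real.rpow_add' hx (by norm_num)
    _ ≤ T ^ (1 - β) * x ^ β := by gcongr

theorem mul_add_mul_add_mul_le {a₁ a₂ a₃ x₁ x₂ x₃ q : ℝ} (ha₁ : 0 ≤ a₁) (ha₂ : 0 ≤ a₂)
    (ha₃ : 0 ≤ a₃) (hx₁ : 0 ≤ x₁) (hx₂ : 0 ≤ x₂) (hx₃ : 0 ≤ x₃) (hq : 0 ≤ q) :
    a₁ * x₁ * q + a₂ * x₂ * q + a₃ * x₃ * q ≤ (a₁ + a₂ + a₃) * (x₁ + x₂ + x₃) * q := by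
  have hcross : a₁ * x₁ + a₂ * x₂ + a₃ * x₃ ≤ (a₁ + a₂ + a₃) * (x₁ + x₂ + x₃) := by
    nlinarith [mul_nonneg ha₁ hx₂, mul_nonneg ha₁ hx₃, mul_nonneg ha₂ hx₁, mul_nonneg ha₂ hx₃,
      mul_nonneg ha₃ hx₁, mul_nonneg ha₃ hx₂]
  calc a₁ * x₁ * q + a₂ * x₂ * q + a₃ * x₃ * q = (a₁ * x₁ + a₂ * x₂ + a₃ * x₃) * q := by ring
    _ ≤ (a₁ + a₂ + a₃) * (x₁ + x₂ + x₃) * q := by gcongr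

theorem abs_sum_mul_le_card_mul_norm {κ : Type*} [Fintype κ] {a x : κ → ℝ} {A : ℝ}
    (ha : ∀ i, |a i| ≤ A) : |∑ i, a i * x i| ≤ Fintype.card κ * A * ‖x‖ :=
  calc |∑ i, a i * x i| ≤ ∑ i, |a i * x i| := abs_sum_le_sum_abs _ _
    _ ≤ ∑ _i : κ, A * ‖x‖ := by
      refine sum_le_sum fun i _ => ?_
      rw [abs_mul]
      exact mul_le_mul (ha i) (norm_le_pi_norm x i) (abs_nonneg _) ((abs_nonneg _).trans (ha i))
    _ = Fintype.card κ * A * ‖x‖ := by rw [sum_const, card_univ, nsmul_eq_mul, mul_assoc]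

theorem abs_integral_le_of_abs_le_mul_sub_rpow_neg {f : ℝ → ℝ} {a b K α : ℝ} (hab : a ≤ b)
    (hK : 0 ≤ K) (hα : α < 1) (hf : ∀ s ∈ Set.Ioc a b, |f s| ≤ K * (s - a) ^ (-α)) :
    |∫ s in a..b, f s| ≤ K * ((b - a) ^ (1 - α) / (1 - α)) := by
  have hkernel : ∫ s in a..b, (s - a) ^ (-α) = (b - a) ^ (1 - α) / (1 - α) := by
    rw [intervalIntegral.integral_comp_sub_right (fun x : ℝ => x ^ (-α)), sub_self,
      integral_rpow (Or.inl (by linarith)), Real.zero_rpow (by linarith),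
      neg_add_eq_sub, sub_zero]
  have hint : IntervalIntegrable (fun s => K * (s - a) ^ (-α)) MeasureTheory.volume a b := by
    refine IntervalIntegrable.const_mul ?_ K
    simpa using (intervalIntegral.intervalIntegrable_rpow' (a := 0) (b := b - a)
      (by linarith : -1 < -α)).comp_sub_right a
  have hbound := intervalIntegral.norm_integral_le_abs_of_norm_le
    (MeasureTheory.ae_restrict_of_forall_mem measurableSet_uIoc fun s hs => by
      rw [Real.norm_eq_abs]; exact hf s (Set.uIoc_of_le hab ▸ hs)) hint
  have hkernel_nonneg : 0 ≤ (b - a) ^ (1 - α) / (1 - α) :=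
    div_nonneg (Real.rpow_nonneg (sub_nonneg.2 hab) _) (by linarith)
  rwa [intervalIntegral.integral_const_mul, hkernel, abs_of_nonneg (by positivity)] at hbound

theorem integral_sub_integral_eq_sum_add_remainder {κ : Type*} [Fintype κ] {f g₀ g₁ : ℝ → ℝ}
    {g : κ → ℝ → ℝ} {c : κ → ℝ} {u v t : ℝ} (hvt : v ≤ t) (hg₀ : Continuous g₀)
    (hg₁ : Continuous g₁) (hg : ∀ i, Continuous (g i))
    (hf : ∀ s ∈ Set.Ioc v t, f s = g₀ s - g₁ s - ∑ i, c i * g i s) :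
    (∫ s in v..t, g₀ s) - (∫ s in u..t, g₁ s)
      = (∑ i, c i * ∫ s in u..t, g i s)
        + ((∫ s in v..t, f s) - (∫ s in u..v, g₁ s) - ∑ i, (∫ s in u..v, g i s) * c i) := by
  have hint (φ : ℝ → ℝ) (hφ : Continuous φ) (a b : ℝ) :=
    hφ.intervalIntegrable (μ := MeasureTheory.volume) a b
  have hf_integral : ∫ s in v..t, f s
      = (∫ s in v..t, g₀ s) - (∫ s in v..t, g₁ s) - ∑ i, c i * ∫ s in v..t, g i s := by
    rw [intervalIntegral.integral_congr_ae (g := fun s => g₀ s - g₁ s - ∑ i, c i * g i s)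
        (.of_forall fun s hs => hf s (Set.uIoc_of_le hvt ▸ hs)),
      intervalIntegral.integral_sub ((hint _ hg₀ v t).sub (hint _ hg₁ v t))
        (hint (fun s => ∑ i, c i * g i s)
          (continuous_finsetSum _ fun i _ => continuous_const.mul (hg i)) v t),
      intervalIntegral.integral_sub (hint _ hg₀ v t) (hint _ hg₁ v t),
      intervalIntegral.integral_finsetSum fun i _ => (hint _ (hg i) v t).const_mul (c i)]
    simp only [intervalIntegral.integral_const_mul]
  have hsplit (φ : ℝ → ℝ) (hφ : Continuous φ) :
      ∫ s in u..t, φ s = (∫ s in u..v, φ s) + ∫ s in v..t, φ s :=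
    (intervalIntegral.integral_add_adjacent_intervals (hint φ hφ u v) (hint φ hφ v t)).symm
  simp only [hf_integral, hsplit g₁ hg₁, hsplit _ (hg _), mul_add, sum_add_distrib,
    mul_comm (∫ s in u..v, g _ s)]
  ring

section Semigroup

variable {H : Type*} [NormedAddCommGroup H] [InnerProductSpace ℝ H]

theorem abs_integral_inner_semigroup_le {S : ℝ → H →L[ℝ] H} {C T M β u v : ℝ}
    (hSb : ∀ r : ℝ, 0 ≤ r → r ≤ T → ‖S r‖ ≤ C) (hβ : β ≤ 1) (huv : u ≤ v) (hvuT : v - u ≤ T)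
    {w : H} (hw : ‖w‖ ≤ M) (h : H) :
    |∫ s in u..v, ⟪S (s - u) w, h⟫| ≤ C * T ^ (1 - β) * M * (‖h‖ * (v - u) ^ β) := by
  have hC : 0 ≤ C := (norm_nonneg _).trans (hSb 0 le_rfl ((sub_nonneg.2 huv).trans hvuT))
  have hM : 0 ≤ M := (norm_nonneg _).trans hw
  have hpointwise : ∀ s ∈ Set.uIoc u v, ‖⟪S (s - u) w, h⟫‖ ≤ C * M * ‖h‖ := by
    intro s hs
    rw [Set.uIoc_of_le huv] at hs
    calc ‖⟪S (s - u) w, h⟫‖ ≤ ‖S (s - u) w‖ * ‖h‖ := norm_inner_le_norm _ _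
      _ ≤ C * M * ‖h‖ := by
        gcongr
        exact (S (s - u)).le_of_opNorm_le_of_le (hSb _ (by linarith [hs.1]) (by linarith [hs.2])) hw
  have hbound := intervalIntegral.norm_integral_le_of_norm_le_const hpointwise
  rw [Real.norm_eq_abs, abs_of_nonneg (sub_nonneg.2 huv)] at hbound
  calc |∫ s in u..v, ⟪S (s - u) w, h⟫| ≤ C * M * ‖h‖ * (v - u) := hbound
    _ ≤ C * M * ‖h‖ * (T ^ (1 - β) * (v - u) ^ β) := by
      gcongr
      exact le_rpow_one_sub_mul_rpow (sub_nonneg.2 huv) hvuT hβ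
    _ = C * T ^ (1 - β) * M * (‖h‖ * (v - u) ^ β) := by ring

theorem abs_sum_integral_inner_semigroup_mul_le {κ : Type*} [Fintype κ] {S : ℝ → H →L[ℝ] H}
    {C T M K γ u v : ℝ} (hSb : ∀ r : ℝ, 0 ≤ r → r ≤ T → ‖S r‖ ≤ C) (hγ0 : 0 ≤ γ) (hγ1 : γ ≤ 1)
    (huv : u ≤ v) (hvuT : v - u ≤ T) {z : κ → H} (hz : ∀ i, ‖z i‖ ≤ M) {x : κ → ℝ}
    (hx : ‖x‖ ≤ K * (v - u) ^ γ) (h : H) :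
    |∑ i, (∫ s in u..v, ⟪S (s - u) (z i), h⟫) * x i|
      ≤ Fintype.card κ * C * T ^ (1 - γ) * (M * K) * (‖h‖ * (v - u) ^ (2 * γ)) := by
  rcases isEmpty_or_nonempty κ with hκ | ⟨⟨i₀⟩⟩
  · simp
  have hbound (j : κ) := abs_integral_inner_semigroup_le hSb hγ1 huv hvuT (hz j) h
  have hsq : (v - u) ^ γ * (v - u) ^ γ = (v - u) ^ (2 * γ) := by
    rw [← Real.rpow_add_of_nonneg (sub_nonneg.2 huv) hγ0 hγ0, two_mul]
  calc |∑ i, (∫ s in u..v, ⟪S (s - u) (z i), h⟫) * x i|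
      ≤ Fintype.card κ * (C * T ^ (1 - γ) * M * (‖h‖ * (v - u) ^ γ)) * ‖x‖ :=
        abs_sum_mul_le_card_mul_norm hbound
    _ ≤ Fintype.card κ * (C * T ^ (1 - γ) * M * (‖h‖ * (v - u) ^ γ)) * (K * (v - u) ^ γ) := by
        gcongr
        exact mul_nonneg (Nat.cast_nonneg _) ((abs_nonneg _).trans (hbound i₀))
    _ = Fintype.card κ * C * T ^ (1 - γ) * (M * K) * (‖h‖ * (v - u) ^ (2 * γ)) := by
        rw [← hsq]; ring

end Semigroup

section Smoothing

variable {H E : Type*} [NormedAddCommGroup H] [InnerProductSpace ℝ H]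
  [NormedAddCommGroup E] [NormedSpace ℝ E]

theorem abs_integral_inner_smoothing_le {Sh : ℝ → E →L[ℝ] H} {C α t v ρ : ℝ} (hC : 0 ≤ C)
    (hα : α < 1) (hv : 0 ≤ v) (hvt : v ≤ t)
    (hShb : ∀ r : ℝ, 0 < r → r ≤ t → ∀ w : E, ‖Sh r w‖ ≤ C * r ^ (-α) * ‖w‖)
    {w : E} (hw : ‖w‖ ≤ ρ) (h : H) :
    |∫ s in v..t, ⟪Sh (s - v) w, h⟫| ≤ C / (1 - α) * ρ * t ^ (1 - α) * ‖h‖ := by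
  have hρ : 0 ≤ ρ := (norm_nonneg _).trans hw
  have hpointwise : ∀ s ∈ Set.Ioc v t, |⟪Sh (s - v) w, h⟫| ≤ C * ρ * ‖h‖ * (s - v) ^ (-α) := by
    intro s hs
    have hsv : 0 < s - v := sub_pos.2 hs.1
    calc |⟪Sh (s - v) w, h⟫| ≤ ‖Sh (s - v) w‖ * ‖h‖ := abs_real_inner_le_norm _ _
      _ ≤ C * (s - v) ^ (-α) * ρ * ‖h‖ := by
        gcongr
        exact (hShb _ hsv (by linarith [hs.2]) w).trans (by gcongr)
      _ = C * ρ * ‖h‖ * (s - v) ^ (-α) := by ring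
  calc |∫ s in v..t, ⟪Sh (s - v) w, h⟫|
      ≤ C * ρ * ‖h‖ * ((t - v) ^ (1 - α) / (1 - α)) :=
        abs_integral_le_of_abs_le_mul_sub_rpow_neg hvt (by positivity) hα hpointwise
    _ ≤ C * ρ * ‖h‖ * (t ^ (1 - α) / (1 - α)) := by
        have : 0 < 1 - α := by linarith
        gcongr
        linarith
    _ = C / (1 - α) * ρ * t ^ (1 - α) * ‖h‖ := by ring

theorem smoothing_apply_remainder_eq {κ : Type*} [Fintype κ] {S : ℝ → H →L[ℝ] H}
    {Sh : ℝ → E →L[ℝ] H} {ι : H →L[ℝ] E}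
    (hSadd : ∀ a b : ℝ, 0 ≤ a → 0 ≤ b → S (a + b) = (S a).comp (S b))
    (hrestr : ∀ r : ℝ, 0 < r → ∀ u : H, Sh r (ι u) = S r u) {r τ : ℝ} (hr : 0 < r) (hτ : 0 ≤ τ)
    {y y₀ : H} {z : κ → H} {c : κ → ℝ} {R : E}
    (hctrl : ι y = ι (S τ y₀) + (∑ i, c i • ι (S τ (z i))) + R) :
    Sh r R = S r y - S (r + τ) y₀ - ∑ i, c i • S (r + τ) (z i) := by
  have hcomp (x : H) : Sh r (ι (S τ x)) = S (r + τ) x := by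
    rw [hrestr r hr, hSadd r τ hr.le hτ, ContinuousLinearMap.comp_apply]
  have := congrArg (Sh r) hctrl
  simp only [map_add, map_sum, map_smul, hcomp, hrestr r hr] at this
  rw [this]
  abel

end Smoothing

theorem time_integrated_pairing_is_controlled_general
    {H E : Type*} [NormedAddCommGroup H] [InnerProductSpace ℝ H]
    [NormedAddCommGroup E] [NormedSpace ℝ E]
    (d : ℕ) (γ t C CR MY MY' CX : ℝ)
    (hγ1 : 1 / 3 < γ) (hγ2 : γ < 1 / 2) (ht : 0 < t)
    (hC : 0 ≤ C) (hCR : 0 ≤ CR) (hMY : 0 ≤ MY) (hMY' : 0 ≤ MY') (hCX : 0 ≤ CX)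
    (S : ℝ → H →L[ℝ] H) (Sh : ℝ → E →L[ℝ] H) (ι : H →L[ℝ] E)
    (hSadd : ∀ a b : ℝ, 0 ≤ a → 0 ≤ b → S (a + b) = (S a).comp (S b))
    (hScont : ∀ u : H, Continuous fun r => S r u)
    (hSb : ∀ r : ℝ, 0 ≤ r → r ≤ t → ‖S r‖ ≤ C)
    (hrestr : ∀ r : ℝ, 0 < r → ∀ u : H, Sh r (ι u) = S r u)
    (hShb : ∀ r : ℝ, 0 < r → r ≤ t → ∀ w : E, ‖Sh r w‖ ≤ C * r ^ (-(2 * γ)) * ‖w‖)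
    (X : ℝ → ℝ → Fin d → ℝ)
    (hX : ∀ u v : ℝ, 0 ≤ u → u ≤ v → v ≤ t → ‖X v u‖ ≤ CX * (v - u) ^ γ)
    (Y : ℝ → H) (Y' : ℝ → Fin d → H) (RY : ℝ → ℝ → E)
    (hYb : ∀ r : ℝ, 0 ≤ r → r ≤ t → ‖Y r‖ ≤ MY)
    (hY'b : ∀ (r : ℝ) (i : Fin d), 0 ≤ r → r ≤ t → ‖Y' r i‖ ≤ MY')
    (hctrl : ∀ u v : ℝ, 0 ≤ u → u ≤ v → v ≤ t →
      ι (Y v) = ι (S (v - u) (Y u)) + (∑ i, X v u i • ι (S (v - u) (Y' u i))) + RY v u)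
    (hRb : ∀ u v : ℝ, 0 ≤ u → u ≤ v → v ≤ t → ‖RY v u‖ ≤ CR * (v - u) ^ (2 * γ))
    (h : H) :
    ∃ C' : ℝ, 0 ≤ C' ∧ ∀ u v : ℝ, 0 ≤ u → u ≤ v → v ≤ t →
      ((∫ s in v..t, ⟪S (s - v) (Y v), h⟫) - (∫ s in u..t, ⟪S (s - u) (Y u), h⟫)
          = (∑ i, X v u i * ∫ s in u..t, ⟪S (s - u) (Y' u i), h⟫)
            + ((∫ s in v..t, ⟪Sh (s - v) (RY v u), h⟫)
                - (∫ s in u..v, ⟪S (s - u) (Y u), h⟫)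
                - ∑ i, (∫ s in u..v, ⟪S (s - u) (Y' u i), h⟫) * X v u i)) ∧
      |(∫ s in v..t, ⟪Sh (s - v) (RY v u), h⟫)
          - (∫ s in u..v, ⟪S (s - u) (Y u), h⟫)
          - ∑ i, (∫ s in u..v, ⟪S (s - u) (Y' u i), h⟫) * X v u i|
        ≤ C' * (CR * t ^ (1 - 2 * γ) + MY + MY' * CX) * ‖h‖ * (v - u) ^ (2 * γ) := by
  have h2γ : 2 * γ < 1 := by linarith
  have h1 : 0 < 1 - 2 * γ := sub_pos.2 h2γ
  refine ⟨C / (1 - 2 * γ) + C * t ^ (1 - 2 * γ) + d * C * t ^ (1 - γ), by positivity,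
    fun u v hu huv hvt => ⟨?_, ?_⟩⟩
  · have hcont (a : ℝ) (w : H) : Continuous fun s => ⟪S (s - a) w, h⟫ :=
      ((hScont w).comp (continuous_sub_right a)).inner continuous_const
    refine integral_sub_integral_eq_sum_add_remainder hvt (hcont v _) (hcont u _)
      (fun i => hcont u _) fun s hs => ?_
    rw [smoothing_apply_remainder_eq hSadd hrestr (sub_pos.2 hs.1) (sub_nonneg.2 huv)
      (hctrl u v hu huv hvt), sub_add_sub_cancel, inner_sub_left, inner_sub_left, sum_inner]
    simp only [real_inner_smul_left]
  · have hvut : v - u ≤ t := by linarith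
    have hsmoothing := abs_integral_inner_smoothing_le hC h2γ (hu.trans huv) hvt hShb
      (hRb u v hu huv hvt) h
    have hdrift := abs_integral_inner_semigroup_le hSb h2γ.le huv hvut
      (hYb u hu (huv.trans hvt)) h
    have hgubinelli := abs_sum_integral_inner_semigroup_mul_le (γ := γ) hSb (by linarith)
      (by linarith) huv hvut (fun i => hY'b u i hu (huv.trans hvt)) (hX u v hu huv hvt) h
    rw [Fintype.card_fin] at hgubinelli
    calc _ ≤ C / (1 - 2 * γ) * (CR * t ^ (1 - 2 * γ)) * (‖h‖ * (v - u) ^ (2 * γ))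
          + C * t ^ (1 - 2 * γ) * MY * (‖h‖ * (v - u) ^ (2 * γ))
          + d * C * t ^ (1 - γ) * (MY' * CX) * (‖h‖ * (v - u) ^ (2 * γ)) := by
          refine (abs_sub _ _).trans (add_le_add ((abs_sub _ _).trans (add_le_add ?_ hdrift))
            hgubinelli)
          exact hsmoothing.trans_eq (by ring)
      _ ≤ _ := by
          refine (mul_add_mul_add_mul_le ?_ ?_ ?_ ?_ hMY ?_ ?_).trans_eq (by ring) <;> positivity

theorem time_integrated_pairing_is_controlled
    {H E : Type*} [NormedAddCommGroup H] [InnerProductSpace ℝ H]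
    [NormedAddCommGroup E] [NormedSpace ℝ E]
    (d : ℕ) (γ t C CR MY MY' CX : ℝ)
    (hγ1 : 1 / 3 < γ) (hγ2 : γ < 1 / 2) (ht : 0 < t)
    (hC : 0 ≤ C) (hCR : 0 ≤ CR) (hMY : 0 ≤ MY) (hMY' : 0 ≤ MY') (hCX : 0 ≤ CX)
    (S : ℝ → H →L[ℝ] H) (Sh : ℝ → E →L[ℝ] H) (ι : H →L[ℝ] E)
    (hS0 : S 0 = ContinuousLinearMap.id ℝ H)
    (hSadd : ∀ a b : ℝ, 0 ≤ a → 0 ≤ b → S (a + b) = (S a).comp (S b))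
    (hScont : ∀ u : H, Continuous fun r => S r u)
    (hSb : ∀ r : ℝ, 0 ≤ r → r ≤ t → ‖S r‖ ≤ C)
    (hrestr : ∀ r : ℝ, 0 < r → ∀ u : H, Sh r (ι u) = S r u)
    (hShb : ∀ r : ℝ, 0 < r → r ≤ t → ∀ w : E, ‖Sh r w‖ ≤ C * r ^ (-(2 * γ)) * ‖w‖)
    (hShcont : ∀ w : E, ContinuousOn (fun r => Sh r w) (Set.Ioi (0 : ℝ)))
    (X : ℝ → ℝ → Fin d → ℝ)
    (hX : ∀ u v : ℝ, 0 ≤ u → u ≤ v → v ≤ t → ‖X v u‖ ≤ CX * (v - u) ^ γ)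
    (Y : ℝ → H) (Y' : ℝ → Fin d → H) (RY : ℝ → ℝ → E)
    (hYb : ∀ r : ℝ, 0 ≤ r → r ≤ t → ‖Y r‖ ≤ MY)
    (hY'b : ∀ (r : ℝ) (i : Fin d), 0 ≤ r → r ≤ t → ‖Y' r i‖ ≤ MY')
    (hctrl : ∀ u v : ℝ, 0 ≤ u → u ≤ v → v ≤ t →
      ι (Y v) = ι (S (v - u) (Y u)) + (∑ i, X v u i • ι (S (v - u) (Y' u i))) + RY v u)
    (hRb : ∀ u v : ℝ, 0 ≤ u → u ≤ v → v ≤ t → ‖RY v u‖ ≤ CR * (v - u) ^ (2 * γ))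
    (h : H) :
    ∃ C' : ℝ, 0 ≤ C' ∧ ∀ u v : ℝ, 0 ≤ u → u ≤ v → v ≤ t →
      ((∫ s in v..t, ⟪S (s - v) (Y v), h⟫) - (∫ s in u..t, ⟪S (s - u) (Y u), h⟫)
          = (∑ i, X v u i * ∫ s in u..t, ⟪S (s - u) (Y' u i), h⟫)
            + ((∫ s in v..t, ⟪Sh (s - v) (RY v u), h⟫)
                - (∫ s in u..v, ⟪S (s - u) (Y u), h⟫)
                - ∑ i, (∫ s in u..v, ⟪S (s - u) (Y' u i), h⟫) * X v u i)) ∧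
      |(∫ s in v..t, ⟪Sh (s - v) (RY v u), h⟫)
          - (∫ s in u..v, ⟪S (s - u) (Y u), h⟫)
          - ∑ i, (∫ s in u..v, ⟪S (s - u) (Y' u i), h⟫) * X v u i|
        ≤ C' * (CR * t ^ (1 - 2 * γ) + MY + MY' * CX) * ‖h‖ * (v - u) ^ (2 * γ) :=
  time_integrated_pairing_is_controlled_general d γ t C CR MY MY' CX hγ1 hγ2 ht hC hCR hMY hMY' hCX
    S Sh ι hSadd hScont hSb hrestr hShb X hX Y Y' RY hYb hY'b hctrl hRb h
end

section
/- Let H be a separable Hilbert space, Π : H → H a finite-rank orthogonal projection, a ∈ (0,1), and define S_a = {φ ∈ H : ‖φ‖ = 1, ‖Πφ‖ ≥ a}. Suppose A ⊆ H is a set whose linear span is dense in H. Then there exist finitely many elements A_1,…,A_m ∈ A and a constant Λ > 0 such that inf_{φ ∈ S_a} Σ_{i=1}^m ⟨φ, A_i⟩² ≥ Λ. -/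
open scoped RealInnerProductSpace

open Set Submodule Metric

/-!
By compactness of the unit ball of `K`, finitely many `A_i` span a subspace `F` that comes
within `δ = a² / 2` of every vector of that ball. For `φ ∈ S_a` the vector `Π φ` is then
`δ`-close to `F`, which forces `‖P_F φ‖ ≥ δ / (1 + δ)`. On the finite-dimensional `F` the
form `Σ ⟨·, A_i⟩²` is positive definite, hence bounded below by a multiple of `‖·‖²`, and
`⟨φ, A_i⟩ = ⟨P_F φ, A_i⟩`.
-/

theorem exists_finset_subset_thickening_span {𝕜 E : Type*} [NontriviallyNormedField 𝕜]
    [NormedAddCommGroup E] [NormedSpace 𝕜 E] {A C : Set E} (hC : IsCompact C)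
    (hCA : C ⊆ closure (span 𝕜 A)) {δ : ℝ} (hδ : 0 < δ) :
    ∃ s : Finset E, ↑s ⊆ A ∧ C ⊆ thickening δ (span 𝕜 (s : Set E)) := by
  classical
  let U : {s : Finset E // ↑s ⊆ A} → Set E := fun s => thickening δ (span 𝕜 (s.1 : Set E))
  have hcover : C ⊆ ⋃ s, U s := by
    intro x hx
    obtain ⟨y, hy, hxy⟩ := mem_thickening_iff.mp (closure_subset_thickening hδ _ (hCA hx))
    obtain ⟨s, hsA, hys⟩ := mem_span_finite_of_mem_span hy
    exact mem_iUnion.mpr ⟨⟨s, hsA⟩, mem_thickening_iff.mpr ⟨y, hys, hxy⟩⟩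
  have hdir : Directed (· ⊆ ·) U := fun s t =>
    ⟨⟨s.1 ∪ t.1, by simpa using And.intro s.2 t.2⟩,
      thickening_subset_of_subset δ (span_mono (by simp)),
      thickening_subset_of_subset δ (span_mono (by simp))⟩
  have : Nonempty {s : Finset E // ↑s ⊆ A} := ⟨⟨∅, by simp⟩⟩
  obtain ⟨s, hs⟩ := hC.elim_directed_cover U (fun _ => isOpen_thickening) hcover hdir
  exact ⟨s.1, s.2, hs⟩

section InnerProductSpace

variable {E : Type*} [NormedAddCommGroup E] [InnerProductSpace ℝ E]

theorem exists_pos_mul_norm_sq_orthogonalProjectionOnto_le_sum_inner_sq (s : Finset E) :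
    ∃ c > 0, ∀ φ : E,
      c * ‖(span ℝ (s : Set E)).orthogonalProjectionOnto φ‖ ^ 2 ≤ ∑ x ∈ s, ⟪φ, x⟫ ^ 2 := by
  set F := span ℝ (s : Set E)
  let T : F →ₗ[ℝ] EuclideanSpace ℝ s :=
    (WithLp.linearEquiv 2 ℝ (s → ℝ)).symm.toLinearMap ∘ₗ
      LinearMap.pi fun x => (innerₛₗ ℝ (x : E)).comp F.subtype
  have hT : ∀ y : F, ‖T y‖ ^ 2 = ∑ x ∈ s, ⟪(y : E), x⟫ ^ 2 := by
    intro y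
    rw [EuclideanSpace.real_norm_sq_eq, ← Finset.sum_coe_sort s]
    simp [T, real_inner_comm]
  have hker : LinearMap.ker T = ⊥ := by
    refine LinearMap.ker_eq_bot'.mpr fun y hy => ?_
    have hperp : F ≤ LinearMap.ker (innerₛₗ ℝ (y : E)) := span_le.mpr fun x hx => by
      simpa [T, real_inner_comm] using congrArg (fun z => z ⟨x, hx⟩) hy
    exact Subtype.ext (inner_self_eq_zero.mp (hperp y.2))
  obtain ⟨K, -, hK⟩ := T.exists_antilipschitzWith hker
  obtain ⟨c, hc0, hc⟩ := antilipschitzWith_iff_exists_mul_le_norm.mp ⟨K, hK⟩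
  refine ⟨c ^ 2, by positivity, fun φ => ?_⟩
  have hproj : ∀ x ∈ s, ⟪φ, x⟫ = ⟪(F.orthogonalProjectionOnto φ : E), x⟫ := fun x hx =>
    (inner_orthogonalProjectionOnto_eq_of_mem_right ⟨x, subset_span hx⟩ φ).symm
  calc c ^ 2 * ‖F.orthogonalProjectionOnto φ‖ ^ 2
      = (c * ‖F.orthogonalProjectionOnto φ‖) ^ 2 := by ring
    _ ≤ ‖T (F.orthogonalProjectionOnto φ)‖ ^ 2 := by gcongr; exact hc _
    _ = ∑ x ∈ s, ⟪φ, x⟫ ^ 2 := by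
      rw [hT]
      exact Finset.sum_congr rfl fun x hx => by rw [hproj x hx]

theorem sq_norm_orthogonalProjectionOnto_sub_le_of_mem_thickening (K F : Submodule ℝ E)
    [K.HasOrthogonalProjection] [F.HasOrthogonalProjection] {φ : E} (hφ : ‖φ‖ ≤ 1) {δ : ℝ}
    (hK : (K.orthogonalProjectionOnto φ : E) ∈ thickening δ (F : Set E)) :
    ‖K.orthogonalProjectionOnto φ‖ ^ 2 - δ ≤ ‖F.orthogonalProjectionOnto φ‖ * (1 + δ) := by
  set k := K.orthogonalProjectionOnto φ
  obtain ⟨y, hyF, hky⟩ := mem_thickening_iff.mp hK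
  rw [dist_eq_norm] at hky
  have hk : ‖k‖ ^ 2 = ⟪φ, k⟫ := by
    rw [← inner_orthogonalProjectionOnto_eq_of_mem_right k φ, ← real_inner_self_eq_norm_sq]
  have hφy : ⟪φ, y⟫ ≤ ‖F.orthogonalProjectionOnto φ‖ * ‖y‖ := by
    rw [← inner_orthogonalProjectionOnto_eq_of_mem_right ⟨y, hyF⟩ φ]
    exact real_inner_le_norm _ _
  have hφky : ⟪φ, (k : E) - y⟫ ≤ ‖(k : E) - y‖ :=
    (real_inner_le_norm _ _).trans (mul_le_of_le_one_left (norm_nonneg _) hφ)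
  have hy : ‖y‖ ≤ 1 + δ :=
    calc ‖y‖ = ‖(k : E) - ((k : E) - y)‖ := by rw [sub_sub_cancel]
      _ ≤ ‖k‖ + ‖(k : E) - y‖ := norm_sub_le _ _
      _ ≤ 1 + δ := by linarith [(K.norm_orthogonalProjectionOnto_apply_le φ).trans hφ]
  have := mul_le_mul_of_nonneg_left hy (norm_nonneg (F.orthogonalProjectionOnto φ))
  linarith [inner_sub_right (𝕜 := ℝ) φ (k : E) y]

end InnerProductSpace

theorem uniform_nondegeneracy_from_dense_span_general
    {H : Type*} [NormedAddCommGroup H] [InnerProductSpace ℝ H]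
    (K : Submodule ℝ H) [FiniteDimensional ℝ K]
    (a : ℝ) (ha0 : 0 < a)
    (A : Set H) (hA : (Submodule.span ℝ A).topologicalClosure = ⊤) :
    ∃ (m : ℕ) (v : Fin m → H), (∀ i, v i ∈ A) ∧
      ∃ Λ : ℝ, 0 < Λ ∧ ∀ φ : H, ‖φ‖ = 1 → a ≤ ‖(K.orthogonalProjection φ : K)‖ →
        Λ ≤ ∑ i, (⟪φ, v i⟫) ^ 2 := by
  set δ := a ^ 2 / 2 with hδ
  have hdense : closure (span ℝ A : Set H) = univ := by
    rw [← Submodule.topologicalClosure_coe, hA, top_coe]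
  obtain ⟨s, hsA, hs⟩ := exists_finset_subset_thickening_span (𝕜 := ℝ)
    ((isCompact_closedBall (0 : K) 1).image continuous_subtype_val)
    (hdense ▸ subset_univ _) (by positivity : 0 < δ)
  set F := span ℝ (s : Set H)
  obtain ⟨c, hc0, hc⟩ := exists_pos_mul_norm_sq_orthogonalProjectionOnto_le_sum_inner_sq s
  refine ⟨s.card, fun i => s.equivFin.symm i, fun i => hsA (s.equivFin.symm i).2,
    c * (δ / (1 + δ)) ^ 2, by positivity, fun φ hφ hφa => ?_⟩
  have hk : K.orthogonalProjectionOnto φ ∈ closedBall 0 1 := by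
    simpa [hφ] using K.norm_orthogonalProjectionOnto_apply_le φ
  have hFφ : δ / (1 + δ) ≤ ‖F.orthogonalProjectionOnto φ‖ := by
    have := sq_norm_orthogonalProjectionOnto_sub_le_of_mem_thickening K F hφ.le (hs ⟨_, hk, rfl⟩)
    rw [div_le_iff₀ (by positivity)]
    linarith [pow_le_pow_left₀ ha0.le hφa 2]
  calc c * (δ / (1 + δ)) ^ 2 ≤ c * ‖F.orthogonalProjectionOnto φ‖ ^ 2 := by gcongr
    _ ≤ ∑ x ∈ s, ⟪φ, x⟫ ^ 2 := hc φ
    _ = ∑ i, ⟪φ, s.equivFin.symm i⟫ ^ 2 := by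
      rw [← Finset.sum_coe_sort s, ← Equiv.sum_comp s.equivFin.symm]

theorem uniform_nondegeneracy_from_dense_span
    {H : Type*} [NormedAddCommGroup H] [InnerProductSpace ℝ H] [CompleteSpace H]
    [TopologicalSpace.SeparableSpace H]
    (K : Submodule ℝ H) [FiniteDimensional ℝ K]
    (a : ℝ) (ha0 : 0 < a) (ha1 : a < 1)
    (A : Set H) (hA : (Submodule.span ℝ A).topologicalClosure = ⊤) :
    ∃ (m : ℕ) (v : Fin m → H), (∀ i, v i ∈ A) ∧
      ∃ Λ : ℝ, 0 < Λ ∧ ∀ φ : H, ‖φ‖ = 1 → a ≤ ‖(K.orthogonalProjection φ : K)‖ →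
        Λ ≤ ∑ i, (⟪φ, v i⟫) ^ 2 :=
  uniform_nondegeneracy_from_dense_span_general K a ha0 A hA
end
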